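/- arXiv:2101.08356 — 5 statements merged into one kernel-verified Lean document; each statement's English description precedes it below -/
import Mathlib

section
/- Suppose y is a solution of the initial value problem such that for some T > 0: 0 ≤ y(T) < 1/2, ẏ(T) < 0, 0 < E(T) < 1/4, and E(T)·(T − 2·ln E(T) + 3/2) < 3/8. Then if y has a zero at some time t₀ ≥ T, it must fall into the left well: y(t) → −1 as t → ∞, and y has no zeros after t₀. -/
noncomputable section

/-- `y` solves the ODE `y'' + (2/t) y' + (y^3 - y) = 0` on `(0,∞)` with
`y(0) = b`, `y'(0) = 0`. -/
def IsSolution (b : ℝ) (y : ℝ → ℝ) : Prop :=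
  y 0 = b ∧ deriv y 0 = 0 ∧
  (∀ t : ℝ, 0 ≤ t → DifferentiableAt ℝ y t) ∧
  (∀ t : ℝ, 0 < t → DifferentiableAt ℝ (deriv y) t) ∧
  ∀ t : ℝ, 0 < t →
    deriv (deriv y) t + (2 / t) * deriv y t + ((y t) ^ 3 - y t) = 0

/-- The energy `E(t) = (1/2) y'(t)^2 + (1/4) y(t)^4 - (1/2) y(t)^2`. -/
def energy (y : ℝ → ℝ) (t : ℝ) : ℝ :=
  (1 / 2) * (deriv y t) ^ 2 + (1 / 4) * (y t) ^ 4 - (1 / 2) * (y t) ^ 2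

namespace CrossKit

open Set Filter Real

/-- potential -/
def Vp (x : ℝ) : ℝ := (1 / 4) * x ^ 4 - (1 / 2) * x ^ 2

lemma energy_eq (y : ℝ → ℝ) (t : ℝ) :
    energy y t = (1 / 2) * (deriv y t) ^ 2 + Vp (y t) := by
  unfold energy Vp; ring

variable {b : ℝ} {y : ℝ → ℝ}

lemma hasDeriv (hy : IsSolution b y) {t : ℝ} (ht : 0 < t) :
    HasDerivAt y (deriv y t) t := (hy.2.2.1 t ht.le).hasDerivAt

lemma hasDeriv2 (hy : IsSolution b y) {t : ℝ} (ht : 0 < t) :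
    HasDerivAt (deriv y) (deriv (deriv y) t) t := (hy.2.2.2.1 t ht).hasDerivAt

lemma ode (hy : IsSolution b y) {t : ℝ} (ht : 0 < t) :
    deriv (deriv y) t = -((2 / t) * deriv y t) - ((y t) ^ 3 - y t) := by
  have := hy.2.2.2.2 t ht; linarith

lemma contAt (hy : IsSolution b y) {t : ℝ} (ht : 0 < t) :
    ContinuousAt y t := (hy.2.2.1 t ht.le).continuousAt

lemma contAt' (hy : IsSolution b y) {t : ℝ} (ht : 0 < t) :
    ContinuousAt (deriv y) t := (hy.2.2.2.1 t ht).continuousAt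

lemma hasDerivAt_energy (hy : IsSolution b y) {t : ℝ} (ht : 0 < t) :
    HasDerivAt (energy y) (-(2 / t) * (deriv y t) ^ 2) t := by
  have Hy := hasDeriv hy ht
  have Hv := hasDeriv2 hy ht
  have h : HasDerivAt (fun s => (1 / 2) * (deriv y s) ^ 2 + (1 / 4) * (y s) ^ 4
      - (1 / 2) * (y s) ^ 2)
      ((1 / 2) * ((2 : ℕ) * (deriv y t) ^ 1 * deriv (deriv y) t)
        + (1 / 4) * ((4 : ℕ) * (y t) ^ 3 * deriv y t)
        - (1 / 2) * ((2 : ℕ) * (y t) ^ 1 * deriv y t)) t :=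
    (((Hv.pow 2).const_mul _).add ((Hy.pow 4).const_mul _)).sub ((Hy.pow 2).const_mul _)
  have heq : energy y = fun s => (1 / 2) * (deriv y s) ^ 2 + (1 / 4) * (y s) ^ 4
      - (1 / 2) * (y s) ^ 2 := rfl
  rw [heq]
  convert h using 1
  rw [ode hy ht]
  push_cast
  ring

lemma energy_anti (hy : IsSolution b y) {a : ℝ} (ha : 0 < a) :
    AntitoneOn (energy y) (Ici a) := by
  apply antitoneOn_of_deriv_nonpos (convex_Ici a)
  · exact fun t ht => (hasDerivAt_energy hy (ha.trans_le ht)).continuousAt.continuousWithinAt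
  · intro t ht
    rw [interior_Ici] at ht
    exact (hasDerivAt_energy hy (ha.trans ht)).differentiableAt.differentiableWithinAt
  · intro t ht
    rw [interior_Ici] at ht
    have htp : (0 : ℝ) < t := ha.trans ht
    rw [(hasDerivAt_energy hy htp).deriv]
    have h1 : (0:ℝ) ≤ 2 / t := by positivity
    nlinarith [sq_nonneg (deriv y t)]

variable {b : ℝ} {y : ℝ → ℝ}

lemma Vp_le_energy (y : ℝ → ℝ) (t : ℝ) : Vp (y t) ≤ energy y t := by
  rw [energy_eq]; nlinarith [sq_nonneg (deriv y t)]

lemma Vp_nonpos {x : ℝ} (h2 : x ^ 2 ≤ 2) : Vp x ≤ 0 := by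
  unfold Vp; nlinarith [sq_nonneg x]

lemma Vp_neg {x : ℝ} (h0 : x ≠ 0) (h2 : x ^ 2 < 2) : Vp x < 0 := by
  unfold Vp
  have : 0 < x ^ 2 := by positivity
  nlinarith

lemma neg_quarter_le_Vp (x : ℝ) : -(1 / 4) ≤ Vp x := by
  unfold Vp; nlinarith [sq_nonneg (x ^ 2 - 1)]

/-- derivative of `t * E t` is `E t - 2 v²` -/
lemma hasDerivAt_phi (hy : IsSolution b y) {t : ℝ} (ht : 0 < t) :
    HasDerivAt (fun s => s * energy y s) (energy y t - 2 * (deriv y t) ^ 2) t := by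
  have h := (hasDerivAt_id t).fun_mul (hasDerivAt_energy hy ht)
  refine h.congr_deriv ?_
  field_simp
  simp only [id_eq]; ring

lemma phi_anti (hy : IsSolution b y) {a c : ℝ} (ha : 0 < a)
    (hV : ∀ t ∈ Icc a c, (y t) ^ 2 ≤ 2) :
    AntitoneOn (fun s => s * energy y s) (Icc a c) := by
  have hsub : Ioo a c ⊆ Icc a c := Ioo_subset_Icc_self
  apply antitoneOn_of_deriv_nonpos (convex_Icc a c)
  · intro t htt
    exact (hasDerivAt_phi hy (ha.trans_le htt.1)).continuousAt.continuousWithinAt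
  · intro t htt
    rw [interior_Icc] at htt
    exact (hasDerivAt_phi hy (ha.trans htt.1)).differentiableAt.differentiableWithinAt
  · intro t htt
    rw [interior_Icc] at htt
    rw [(hasDerivAt_phi hy (ha.trans htt.1)).deriv]
    have hV' := Vp_nonpos (hV t (hsub htt))
    rw [energy_eq]
    nlinarith [sq_nonneg (deriv y t)]

private lemma weight_alg {s yt v : ℝ} (hs : 0 < s) (hs2 : s ^ 2 = 1 - yt ^ 2 / 2) :
    -(3 / 2) * s * yt * v = (-(yt * v)) * s + (1 - yt ^ 2 / 2) * (1 / (2 * s) * (-(yt * v))) := by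
  rw [← hs2]
  field_simp
  ring

/-- derivative facts for the weight `(1 - y²/2)·√(1 - y²/2)` -/
lemma hasDerivAt_weight (hy : IsSolution b y) {t : ℝ} (ht : 0 < t)
    (hg : 0 < 1 - (y t) ^ 2 / 2) :
    HasDerivAt (fun s => (1 - (y s) ^ 2 / 2) * Real.sqrt (1 - (y s) ^ 2 / 2))
      (-(3 / 2) * Real.sqrt (1 - (y t) ^ 2 / 2) * (y t) * deriv y t) t := by
  have Hy := hasDeriv hy ht
  have hgd : HasDerivAt (fun s => 1 - (y s) ^ 2 / 2) (-((y t) * deriv y t)) t := by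
    have h := ((Hy.fun_pow 2).div_const 2).const_sub 1
    refine h.congr_deriv ?_
    push_cast; ring
  have hsq : HasDerivAt (fun s => Real.sqrt (1 - (y s) ^ 2 / 2))
      (1 / (2 * Real.sqrt (1 - (y t) ^ 2 / 2)) * (-((y t) * deriv y t))) t := by
    exact (Real.hasDerivAt_sqrt (ne_of_gt hg)).comp t hgd
  have h := hgd.fun_mul hsq
  refine h.congr_deriv ?_
  have hs : Real.sqrt (1 - (y t) ^ 2 / 2) > 0 := Real.sqrt_pos.2 hg
  have hs2 : Real.sqrt (1 - (y t) ^ 2 / 2) ^ 2 = 1 - (y t) ^ 2 / 2 := Real.sq_sqrt hg.le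
  have := weight_alg (v := deriv y t) hs hs2
  linarith

lemma psi_anti (hy : IsSolution b y) {a c : ℝ} (ha : 0 < a)
    (hyr : ∀ t ∈ Icc a c, -1 ≤ y t ∧ y t ≤ 0)
    (hv : ∀ t ∈ Icc a c, deriv y t ≤ 0)
    (hE : ∀ t ∈ Icc a c, 0 ≤ energy y t) :
    AntitoneOn (fun s => s * energy y s
      - (1 - (y s) ^ 2 / 2) * Real.sqrt (1 - (y s) ^ 2 / 2)) (Icc a c) := by
  have hsub : Ioo a c ⊆ Icc a c := Ioo_subset_Icc_self
  have hgpos : ∀ t ∈ Icc a c, 0 < 1 - (y t) ^ 2 / 2 := by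
    intro t htt
    obtain ⟨h1, h2⟩ := hyr t htt
    nlinarith
  apply antitoneOn_of_deriv_nonpos (convex_Icc a c)
  · intro t htt
    exact (((hasDerivAt_phi hy (ha.trans_le htt.1)).sub
      (hasDerivAt_weight hy (ha.trans_le htt.1) (hgpos t htt))).continuousAt).continuousWithinAt
  · intro t htt
    rw [interior_Icc] at htt
    exact ((hasDerivAt_phi hy (ha.trans htt.1)).sub
      (hasDerivAt_weight hy (ha.trans htt.1) (hgpos t (hsub htt)))).differentiableAt.differentiableWithinAt
  · intro t htt
    rw [interior_Icc] at htt
    have htc := hsub htt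
    have htp : 0 < t := ha.trans htt.1
    rw [((hasDerivAt_phi hy htp).fun_sub (hasDerivAt_weight hy htp (hgpos t htc))).deriv]
    obtain ⟨hy1, hy2⟩ := hyr t htc
    have hvt := hv t htc
    have hEt := hE t htc
    set s := Real.sqrt (1 - (y t) ^ 2 / 2) with hsdef
    have hs0 : 0 < s := Real.sqrt_pos.2 (hgpos t htc)
    have hs2 : s ^ 2 = 1 - (y t) ^ 2 / 2 := Real.sq_sqrt (hgpos t htc).le
    rw [energy_eq] at hEt ⊢
    -- A := -v, B := -(y*s);  A² ≥ B² from E ≥ 0, so B ≤ A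
    have hA : 0 ≤ -(deriv y t) := by linarith
    have hB : 0 ≤ -(y t * s) := by nlinarith
    have hsqle : (-(y t * s)) ^ 2 ≤ (-(deriv y t)) ^ 2 := by
      unfold Vp at hEt; nlinarith
    have hBA : -(y t * s) ≤ -(deriv y t) := by nlinarith [sq_nonneg (-(deriv y t) + (y t * s))]
    have hVp : Vp (y t) ≤ 0 := Vp_nonpos (by nlinarith)
    unfold Vp at hVp ⊢
    nlinarith [mul_nonneg hA (sub_nonneg.2 hBA)]

/-- Gronwall-type backward uniqueness tool:
`exp((3+4/a)t) * (v² + y²)` is monotone where `y² ≤ 1`. -/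
lemma gron_mono (hy : IsSolution b y) {a c : ℝ} (ha : 0 < a)
    (hyb : ∀ t ∈ Icc a c, (y t) ^ 2 ≤ 1) :
    MonotoneOn (fun t => Real.exp ((3 + 4 / a) * t) * ((deriv y t) ^ 2 + (y t) ^ 2))
      (Icc a c) := by
  set k : ℝ := 3 + 4 / a with hk
  have hkpos : 0 < k := by positivity
  have hD : ∀ t, 0 < t → HasDerivAt (fun t => Real.exp (k * t) * ((deriv y t) ^ 2 + (y t) ^ 2))
      (Real.exp (k * t) * (k * ((deriv y t) ^ 2 + (y t) ^ 2)
        + (2 * deriv y t * deriv (deriv y) t + 2 * y t * deriv y t))) t := by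
    intro t htp
    have Hy := hasDeriv hy htp
    have Hv := hasDeriv2 hy htp
    have he : HasDerivAt (fun t => Real.exp (k * t)) (Real.exp (k * t) * k) t := by
      have h0 := ((hasDerivAt_id t).const_mul k).exp
      simp only [id] at h0
      simpa using h0
    have hw : HasDerivAt (fun t => (deriv y t) ^ 2 + (y t) ^ 2)
        (2 * deriv y t * deriv (deriv y) t + 2 * y t * deriv y t) t := by
      have h := (Hv.fun_pow 2).fun_add (Hy.fun_pow 2)
      refine h.congr_deriv ?_
      push_cast; ring
    have h := he.fun_mul hw
    refine h.congr_deriv ?_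
    ring
  apply monotoneOn_of_deriv_nonneg (convex_Icc a c)
  · intro t htt
    exact (hD t (ha.trans_le htt.1)).continuousAt.continuousWithinAt
  · intro t htt
    rw [interior_Icc] at htt
    exact (hD t (ha.trans htt.1)).differentiableAt.differentiableWithinAt
  · intro t htt
    rw [interior_Icc] at htt
    have htp : 0 < t := ha.trans htt.1
    rw [(hD t htp).deriv]
    apply mul_nonneg (Real.exp_nonneg _)
    rw [ode hy htp]
    have hy2 := hyb t (Ioo_subset_Icc_self htt)
    have hta : 4 / t ≤ 4 / a := by
      apply div_le_div_of_nonneg_left (by norm_num) ha htt.1.le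
      
    have hz2 : -4 * (y t) ^ 4 + (y t) ^ 6 ≤ 0 := by
      nlinarith [sq_nonneg ((y t) ^ 2), sq_nonneg (y t)]
    have h49 : 0 ≤ (4 / a - 4 / t) * (deriv y t) ^ 2 :=
      mul_nonneg (by linarith) (sq_nonneg _)
    have h4aw : 0 ≤ (4 / a) * (y t) ^ 2 := mul_nonneg (by positivity) (sq_nonneg _)
    rw [hk]
    have key : (3 + 4 / a) * ((deriv y t) ^ 2 + (y t) ^ 2)
        + (2 * deriv y t * (-(2 / t * deriv y t) - ((y t) ^ 3 - y t)) + 2 * y t * deriv y t)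
        = (1 / 2) * ((2 * deriv y t + (2 * y t - (y t) ^ 3)) ^ 2)
          + (4 / a - 4 / t) * (deriv y t) ^ 2 + (4 / a) * (y t) ^ 2
          + (deriv y t) ^ 2 + (y t) ^ 2 + (1 / 2) * (4 * (y t) ^ 4 - (y t) ^ 6) := by ring
    rw [key]
    nlinarith [sq_nonneg (2 * deriv y t + (2 * y t - (y t) ^ 3)), hz2, h49, h4aw,
      sq_nonneg (y t), sq_nonneg (deriv y t)]

variable {b : ℝ} {y : ℝ → ℝ}

/-- sign persistence: a continuous function with no zeros keeps its (positive) sign -/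
lemma pos_on_of_no_zero {f : ℝ → ℝ} {a c : ℝ} (hc : ContinuousOn f (Icc a c))
    (hne : ∀ t ∈ Icc a c, f t ≠ 0) (hfa : 0 < f a) : ∀ t ∈ Icc a c, 0 < f t := by
  intro t ht
  rcases lt_trichotomy (f t) 0 with h | h | h
  · exfalso
    have hsub : Icc a t ⊆ Icc a c := Icc_subset_Icc le_rfl ht.2
    have := intermediate_value_Icc' ht.1 (hc.mono hsub)
    have h0 : (0 : ℝ) ∈ Icc (f t) (f a) := ⟨h.le, hfa.le⟩
    obtain ⟨s, hs, hs0⟩ := this h0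
    exact hne s (hsub hs) hs0
  · exact absurd h (hne t ht)
  · exact h

lemma neg_on_of_no_zero {f : ℝ → ℝ} {a c : ℝ} (hc : ContinuousOn f (Icc a c))
    (hne : ∀ t ∈ Icc a c, f t ≠ 0) (hfa : f a < 0) : ∀ t ∈ Icc a c, f t < 0 := by
  intro t ht
  have h := pos_on_of_no_zero (f := fun s => -(f s)) (hc.neg)
    (fun s hs => neg_ne_zero.2 (hne s hs))
    (show (0 : ℝ) < -(f a) by linarith) t ht
  have h' : 0 < -(f t) := h
  linarith

lemma contOn_y (hy : IsSolution b y) {a c : ℝ} (ha : 0 < a) :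
    ContinuousOn y (Icc a c) :=
  fun t ht => (contAt hy (ha.trans_le ht.1)).continuousWithinAt

lemma contOn_v (hy : IsSolution b y) {a c : ℝ} (ha : 0 < a) :
    ContinuousOn (deriv y) (Icc a c) :=
  fun t ht => (contAt' hy (ha.trans_le ht.1)).continuousWithinAt

lemma contOn_E (hy : IsSolution b y) {a c : ℝ} (ha : 0 < a) :
    ContinuousOn (energy y) (Icc a c) :=
  fun t ht => (hasDerivAt_energy hy (ha.trans_le ht.1)).continuousAt.continuousWithinAt

/-- The core quantitative contradiction: the solution cannot descend from `0` (at `ts`)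
to `-1` (at `t1`) with nonnegative energy throughout. -/
lemma core (hy : IsSolution b y) {T ts t1 : ℝ} (hT : 0 < T)
    (hTts : T ≤ ts) (hts1 : ts ≤ t1)
    (hI : ∀ t ∈ Icc T ts, 0 ≤ y t ∧ y t ≤ 1)
    (hJy : ∀ t ∈ Icc ts t1, -1 ≤ y t ∧ y t ≤ 0)
    (hJv : ∀ t ∈ Icc ts t1, deriv y t ≤ 0)
    (hJE : ∀ t ∈ Icc ts t1, 0 ≤ energy y t)
    (hyts : y ts = 0) (hyt1 : y t1 = -1)
    (h68 : T * energy y T < 3 / 8) : False := by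
  have hphi := phi_anti hy hT (fun t ht => by
    obtain ⟨ha, hb⟩ := hI t ht; nlinarith)
  have hA : ts * energy y ts ≤ T * energy y T :=
    hphi (left_mem_Icc.2 hTts) (right_mem_Icc.2 hTts) hTts
  have hpsi := psi_anti hy (hT.trans_le hTts) hJy hJv hJE
  have hB := hpsi (left_mem_Icc.2 hts1) (right_mem_Icc.2 hts1) hts1
  simp only [hyts, hyt1] at hB
  rw [show ((1 : ℝ) - (0 : ℝ) ^ 2 / 2) = 1 by norm_num,
    show ((1 : ℝ) - (-1 : ℝ) ^ 2 / 2) = 1 / 2 by norm_num, Real.sqrt_one] at hB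
  -- hB : t1 * E t1 - (1/2) * √(1/2) ≤ ts * E ts - 1 * 1
  have hsq : Real.sqrt (1 / 2) ≤ 3 / 4 := by
    nlinarith [Real.sq_sqrt (by norm_num : (0:ℝ) ≤ 1/2), Real.sqrt_nonneg (1/2 : ℝ)]
  have hE1 : 0 ≤ energy y t1 := hJE t1 (right_mem_Icc.2 hts1)
  have ht1p : (0 : ℝ) < t1 := lt_of_lt_of_le hT (hTts.trans hts1)
  have hq : 0 ≤ t1 * energy y t1 := mul_nonneg ht1p.le hE1
  have hsqn : 0 ≤ Real.sqrt (1 / 2 : ℝ) := Real.sqrt_nonneg _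
  nlinarith [hB, hA, hsq, hq, hsqn]

/-- Phase I: between `T` and the first zero `ts`, the solution is strictly decreasing
and stays in `[0, y T]`. -/
lemma phaseI (hy : IsSolution b y) {T ts : ℝ} (hT : 0 < T) (hTts : T ≤ ts)
    (h1 : 0 ≤ y T) (h2 : y T < 1 / 2) (h3 : deriv y T < 0)
    (hz : y ts = 0) (hmin : ∀ t ∈ Ico T ts, y t ≠ 0) :
    (∀ t ∈ Icc T ts, deriv y t < 0) ∧ ∀ t ∈ Icc T ts, 0 ≤ y t ∧ y t ≤ y T := by
  rcases eq_or_lt_of_le hTts with heq | hTts'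
  · subst heq
    constructor <;> intro t ht <;> rw [Icc_self, mem_singleton_iff] at ht <;> subst ht
    · exact h3
    · exact ⟨h1, le_rfl⟩
  -- T < ts
  have ypos : ∀ t ∈ Ico T ts, 0 < y t := by
    intro t ht
    have hTy : y T ≠ 0 := fun h0 => hmin T (left_mem_Ico.2 hTts') h0
    have hTy' : 0 < y T := lt_of_le_of_ne h1 (Ne.symm hTy)
    exact pos_on_of_no_zero (contOn_y hy hT)
      (fun s hs => hmin s ⟨hs.1, lt_of_le_of_lt hs.2 ht.2⟩) hTy' t ⟨ht.1, le_rfl⟩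
  have derivne : ∀ t ∈ Icc T ts, deriv y t ≠ 0 := by
    by_contra hcon
    push_neg at hcon
    obtain ⟨τ₀, hτ₀, hτ₀v⟩ := hcon
    set Z : Set ℝ := Icc T ts ∩ (deriv y) ⁻¹' {0} with hZ
    have hZc : IsClosed Z :=
      (contOn_v hy hT).preimage_isClosed_of_isClosed isClosed_Icc isClosed_singleton
    have hZne : Z.Nonempty := ⟨τ₀, hτ₀, hτ₀v⟩
    have hZbd : BddBelow Z := ⟨T, fun z hz' => hz'.1.1⟩
    set τ := sInf Z with hτdef
    have hτZ : τ ∈ Z := hZc.csInf_mem hZne hZbd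
    have hτIcc : τ ∈ Icc T ts := hτZ.1
    have hτv : deriv y τ = 0 := hτZ.2
    have hTτ : T < τ := by
      rcases lt_or_eq_of_le hτIcc.1 with h | h
      · exact h
      · exact absurd (h ▸ hτv) (ne_of_lt h3)
    have vneg : ∀ t ∈ Ico T τ, deriv y t < 0 := by
      intro t ht
      have hne : ∀ s ∈ Icc T t, deriv y s ≠ 0 := by
        intro s hs hs0
        have : τ ≤ s := csInf_le hZbd ⟨⟨hs.1, le_trans hs.2 (le_trans ht.2.le hτIcc.2)⟩, hs0⟩
        exact absurd (lt_of_le_of_lt this (lt_of_le_of_lt hs.2 ht.2)) (lt_irrefl _)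
      exact neg_on_of_no_zero (contOn_v hy hT) hne h3 t ⟨ht.1, le_rfl⟩
    have hanti : StrictAntiOn y (Icc T τ) := by
      apply strictAntiOn_of_deriv_neg (convex_Icc T τ) (contOn_y hy hT)
      intro t ht
      rw [interior_Icc] at ht
      exact vneg t ⟨ht.1.le, ht.2⟩
    rcases lt_or_eq_of_le hτIcc.2 with hτts | hτts
    · -- τ < ts : energy contradiction
      have hyτ : 0 < y τ := ypos τ ⟨hτIcc.1, hτts⟩
      have hyτT : y τ < y T := hanti (left_mem_Icc.2 hτIcc.1) (right_mem_Icc.2 hτIcc.1) hTτ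
      have hEτ : energy y τ < 0 := by
        rw [energy_eq, hτv]
        have : Vp (y τ) < 0 := Vp_neg (ne_of_gt hyτ) (by nlinarith)
        nlinarith
      have hEts : energy y ts ≤ energy y τ :=
        energy_anti hy hT hτIcc.1 (hTts.trans le_rfl) hτts.le
      have : 0 ≤ energy y ts := by
        rw [energy_eq, hz]
        have : Vp 0 = 0 := by unfold Vp; norm_num
        nlinarith [sq_nonneg (deriv y ts)]
      linarith
    · -- τ = ts : backward Gronwall contradiction
      have hyb : ∀ t ∈ Icc T ts, (y t) ^ 2 ≤ 1 := by
        intro t ht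
        rcases lt_or_eq_of_le ht.2 with h | h
        · have hp := ypos t ⟨ht.1, h⟩
          have hle : y t ≤ y T := by
            rcases lt_or_eq_of_le ht.1 with h' | h'
            · exact (hanti (left_mem_Icc.2 hτIcc.1) (hτts ▸ ht) h').le
            · exact le_of_eq (congrArg y h'.symm)
          nlinarith
        · rw [h, hz]; norm_num
      have hmono := gron_mono hy hT hyb
      have hts0 : deriv y ts = 0 := hτts ▸ hτv
      have hchain : Real.exp ((3 + 4 / T) * T) * ((deriv y T) ^ 2 + (y T) ^ 2)
          ≤ Real.exp ((3 + 4 / T) * ts) * ((deriv y ts) ^ 2 + (y ts) ^ 2) :=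
        hmono (left_mem_Icc.2 hTts) (right_mem_Icc.2 hTts) hTts
      rw [hts0, hz] at hchain
      norm_num at hchain
      have hexp : 0 < Real.exp ((3 + 4 / T) * T) := Real.exp_pos _
      have hv2 : 0 < (deriv y T) ^ 2 := by nlinarith [mul_pos (neg_pos.2 h3) (neg_pos.2 h3)]
      have := mul_pos hexp (show (0:ℝ) < (deriv y T) ^ 2 + (y T) ^ 2 by nlinarith [sq_nonneg (y T)])
      linarith
  -- no critical point: strict descent on all of [T, ts]
  have vneg : ∀ t ∈ Icc T ts, deriv y t < 0 :=
    neg_on_of_no_zero (contOn_v hy hT) derivne h3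
  refine ⟨vneg, ?_⟩
  have hanti : StrictAntiOn y (Icc T ts) := by
    apply strictAntiOn_of_deriv_neg (convex_Icc T ts) (contOn_y hy hT)
    intro t ht
    rw [interior_Icc] at ht
    exact vneg t ⟨ht.1.le, ht.2.le⟩
  intro t ht
  constructor
  · rcases lt_or_eq_of_le ht.2 with h | h
    · exact (ypos t ⟨ht.1, h⟩).le
    · rw [h, hz]
  · rcases lt_or_eq_of_le ht.1 with h | h
    · exact (hanti (left_mem_Icc.2 hTts) ht h).le
    · exact le_of_eq (congrArg y h.symm)


set_option maxHeartbeats 1000000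

lemma Vp_mono_neg {x z : ℝ} (hx : -1 ≤ x) (hxz : x ≤ z) (hz : z ≤ 0) : Vp x ≤ Vp z := by
  unfold Vp
  have hx1 : x ^ 2 ≤ 1 := by nlinarith
  have hz1 : z ^ 2 ≤ 1 := by nlinarith
  have hA : 0 ≤ x ^ 2 - z ^ 2 := by nlinarith [mul_nonneg (sub_nonneg.2 hxz) (by linarith : 0 ≤ -(x + z))]
  nlinarith [mul_nonneg hA (by linarith : 0 ≤ 2 - x ^ 2 - z ^ 2)]

lemma Vp_sqrt2 {x : ℝ} (hx : x ^ 2 = 2) : Vp x = 0 := by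
  unfold Vp
  have h4 : x ^ 4 = (x ^ 2) ^ 2 := by ring
  rw [h4, hx]; norm_num

lemma Vp_zero : Vp 0 = 0 := by unfold Vp; norm_num

/-- The key lemma: beyond the first zero `ts`, the energy eventually becomes negative while
the solution stays negative. -/
lemma keyLemma (hy : IsSolution b y) {T ts : ℝ} (hT : 0 < T) (hTts : T ≤ ts)
    (h1 : 0 ≤ y T) (h2 : y T < 1 / 2) (h3 : deriv y T < 0)
    (h68 : T * energy y T < 3 / 8)
    (hz : y ts = 0) (hmin : ∀ t ∈ Ico T ts, y t ≠ 0) :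
    ∃ t₂, ts < t₂ ∧ energy y t₂ < 0 ∧ ∀ s, ts < s → s ≤ t₂ → y s < 0 := by
  obtain ⟨pv, pyb⟩ := phaseI hy hT hTts h1 h2 h3 hz hmin
  have htsp : 0 < ts := lt_of_lt_of_le hT hTts
  have vts : deriv y ts < 0 := pv ts (right_mem_Icc.2 hTts)
  -- the `[T,ts]` bounds needed by `core`
  have hI : ∀ t ∈ Icc T ts, 0 ≤ y t ∧ y t ≤ 1 := by
    intro t ht
    obtain ⟨ha, hb⟩ := pyb t ht
    exact ⟨ha, by linarith⟩
  -- energy at ts is nonnegative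
  have hEts : 0 ≤ energy y ts := by
    rw [energy_eq, hz, Vp_zero]
    nlinarith [sq_nonneg (deriv y ts)]
  by_contra hcon
  push_neg at hcon
  -- the set of good descent times
  set S : Set ℝ := {t | ts ≤ t ∧ ∀ s ∈ Icc ts t, deriv y s < 0 ∧ (y s) ^ 2 < 2} with hSdef
  have hSts : ts ∈ S := by
    refine ⟨le_rfl, fun s hs => ?_⟩
    rw [Icc_self, mem_singleton_iff] at hs
    subst hs
    exact ⟨vts, by rw [hz]; norm_num⟩
  -- extension property
  have hext : ∀ t ∈ S, deriv y t < 0 → (y t) ^ 2 < 2 → ∃ δ > 0, t + δ ∈ S := by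
    intro t htS hvt hyt
    have htp : 0 < t := lt_of_lt_of_le htsp htS.1
    have e1 : ∀ᶠ s in nhds t, deriv y s < 0 := (contAt' hy htp).eventually_lt_const hvt
    have e2 : ∀ᶠ s in nhds t, (y s) ^ 2 < 2 :=
      (((contAt hy htp).pow 2).eventually_lt_const hyt)
    obtain ⟨δ, hδ, hball⟩ := Metric.eventually_nhds_iff.1 (e1.and e2)
    refine ⟨δ / 2, by linarith, le_trans htS.1 (by linarith), fun s hs => ?_⟩
    rcases le_or_gt s t with h | h
    · exact htS.2 s ⟨hs.1, h⟩
    · apply hball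
      rw [Real.dist_eq, abs_of_pos (by linarith)]
      linarith [hs.2]
  by_cases hbdd : BddAbove S
  · -- bounded case: ρ := sSup S
    set ρ := sSup S with hρdef
    have hρts : ts ≤ ρ := le_csSup hbdd hSts
    have hIco : ∀ s, ts ≤ s → s < ρ → deriv y s < 0 ∧ (y s) ^ 2 < 2 := by
      intro s hs1 hs2
      obtain ⟨x, hxS, hsx⟩ := exists_lt_of_lt_csSup ⟨ts, hSts⟩ hs2
      exact hxS.2 s ⟨hs1, hsx.le⟩
    have hρgt : ts < ρ := by
      obtain ⟨δ, hδ, hmem⟩ := hext ts hSts vts (by rw [hz]; norm_num)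
      have := le_csSup hbdd hmem
      linarith
    have hanti : StrictAntiOn y (Icc ts ρ) := by
      apply strictAntiOn_of_deriv_neg (convex_Icc ts ρ) (contOn_y hy htsp)
      intro s hs
      rw [interior_Icc] at hs
      exact (hIco s hs.1.le hs.2).1
    have hyneg : ∀ s, ts < s → s ≤ ρ → y s < 0 := by
      intro s hs1 hs2
      have := hanti (left_mem_Icc.2 hρts) ⟨hs1.le.trans' le_rfl, hs2⟩ hs1
      rwa [hz] at this
    -- boundary properties at ρ
    have hvρ : deriv y ρ ≤ 0 := by
      by_contra hpos
      push_neg at hpos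
      have e1 : ∀ᶠ s in nhds ρ, 0 < deriv y s :=
        (contAt' hy (htsp.trans hρgt)).eventually_const_lt hpos
      obtain ⟨δ, hδ, hball⟩ := Metric.eventually_nhds_iff.1 e1
      set s := max ts (ρ - δ / 2) with hs
      have hs1 : ts ≤ s := le_max_left _ _
      have hs2 : s < ρ := max_lt hρgt (by linarith)
      have hd : dist s ρ < δ := by
        rw [Real.dist_eq, abs_of_nonpos (by linarith)]
        have : ρ - δ / 2 ≤ s := le_max_right _ _
        linarith
      exact absurd (hball hd) (not_lt.2 (hIco s hs1 hs2).1.le)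
    have hyρ2 : (y ρ) ^ 2 ≤ 2 := by
      by_contra hpos
      push_neg at hpos
      have e1 : ∀ᶠ s in nhds ρ, 2 < (y s) ^ 2 :=
        (((contAt hy (htsp.trans hρgt)).pow 2).eventually_const_lt hpos)
      obtain ⟨δ, hδ, hball⟩ := Metric.eventually_nhds_iff.1 e1
      set s := max ts (ρ - δ / 2) with hs
      have hs1 : ts ≤ s := le_max_left _ _
      have hs2 : s < ρ := max_lt hρgt (by linarith)
      have hd : dist s ρ < δ := by
        rw [Real.dist_eq, abs_of_nonpos (by linarith)]
        have : ρ - δ / 2 ≤ s := le_max_right _ _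
        linarith
      exact absurd (hball hd) (not_lt.2 (hIco s hs1 hs2).2.le)
    rcases lt_or_eq_of_le hyρ2 with hyρlt | hyρeq
    · -- y ρ² < 2 : then deriv y ρ = 0, energy at ρ is negative, contradiction with hcon
      have hvρ0 : deriv y ρ = 0 := by
        rcases lt_or_eq_of_le hvρ with hlt | heq
        · exfalso
          have hρS : ρ ∈ S := by
            refine ⟨hρts, fun s hs => ?_⟩
            rcases lt_or_eq_of_le hs.2 with h | h
            · exact hIco s hs.1 h
            · subst h; exact ⟨hlt, hyρlt⟩
          obtain ⟨δ, hδ, hmem⟩ := hext ρ hρS hlt hyρlt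
          have := le_csSup hbdd hmem
          linarith
        · exact heq
      have hEρ : energy y ρ < 0 := by
        rw [energy_eq, hvρ0]
        have := Vp_neg (ne_of_lt (hyneg ρ hρgt le_rfl)) hyρlt
        nlinarith
      obtain ⟨s, hs1, hs2, hs3⟩ := hcon ρ hρgt hEρ
      exact absurd (hyneg s hs1 hs2) (not_lt.2 hs3)
    · -- y ρ² = 2 : apply the core contradiction
      have hyρneg : y ρ < 0 := hyneg ρ hρgt le_rfl
      have hyρle : y ρ ≤ -1 := by
        by_contra hq
        push_neg at hq
        have hh1 : 0 < y ρ + 1 := by linarith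
        have hh2 : 0 < -y ρ := by linarith
        nlinarith [mul_pos hh1 hh2]
      have hEρ0 : 0 ≤ energy y ρ := by
        rw [energy_eq, Vp_sqrt2 hyρeq]
        nlinarith [sq_nonneg (deriv y ρ)]
      -- find t1 with y t1 = -1
      have hIVT := intermediate_value_Icc' hρts (contOn_y hy htsp)
      have hm : (-1 : ℝ) ∈ Icc (y ρ) (y ts) := ⟨hyρle, by rw [hz]; norm_num⟩
      obtain ⟨t1, ht1, hyt1⟩ := hIVT hm
      have ht1gt : ts < t1 := by
        rcases lt_or_eq_of_le ht1.1 with h | h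
        · exact h
        · exfalso; rw [← h, hz] at hyt1; norm_num at hyt1
      refine core hy hT hTts ht1.1 hI ?_ ?_ ?_ hz hyt1 h68
      · intro t ht
        constructor
        · rcases lt_or_eq_of_le ht.2 with h | h
          · exact (hyt1 ▸ (hanti ⟨ht.1, ht.2.trans ht1.2⟩ ht1 h).le)
          · rw [h, hyt1]
        · rcases lt_or_eq_of_le ht.1 with h | h
          · exact (hyneg t h (ht.2.trans ht1.2)).le
          · exact le_of_eq (by rw [← h, hz])
      · intro t ht
        rcases lt_or_eq_of_le (ht.2.trans ht1.2) with h | h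
        · exact (hIco t ht.1 h).1.le
        · rw [h]; exact hvρ
      · intro t ht
        calc (0:ℝ) ≤ energy y ρ := hEρ0
        _ ≤ energy y t := energy_anti hy hT
            (mem_Ici.2 (hTts.trans ht.1)) (mem_Ici.2 (hTts.trans (ht.1.trans (ht.2.trans ht1.2))))
            (ht.2.trans ht1.2)
  · -- unbounded case
    have hall : ∀ t, ts ≤ t → deriv y t < 0 ∧ (y t) ^ 2 < 2 := by
      intro t ht
      obtain ⟨x, hxS, hx⟩ := not_bddAbove_iff.1 hbdd t
      exact hxS.2 t ⟨ht, hx.le⟩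
    have hanti : ∀ c, StrictAntiOn y (Icc ts c) := by
      intro c
      apply strictAntiOn_of_deriv_neg (convex_Icc ts c) (contOn_y hy htsp)
      intro s hs
      rw [interior_Icc] at hs
      exact (hall s hs.1.le).1
    have hyneg : ∀ s, ts < s → y s < 0 := by
      intro s hs
      have := hanti s (left_mem_Icc.2 hs.le) (right_mem_Icc.2 hs.le) hs
      rwa [hz] at this
    have hE0 : ∀ t, ts < t → 0 ≤ energy y t := by
      intro t ht
      by_contra hneg
      push_neg at hneg
      obtain ⟨s, hs1, hs2, hs3⟩ := hcon t ht hneg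
      exact absurd (hyneg s hs1) (not_lt.2 hs3)
    by_cases hreach : ∃ t', ts ≤ t' ∧ y t' < -1
    · obtain ⟨t', ht'1, ht'2⟩ := hreach
      have hIVT := intermediate_value_Icc' ht'1 (contOn_y hy htsp)
      have hm : (-1 : ℝ) ∈ Icc (y t') (y ts) := ⟨ht'2.le, by rw [hz]; norm_num⟩
      obtain ⟨t1, ht1, hyt1⟩ := hIVT hm
      have ht1gt : ts < t1 := by
        rcases lt_or_eq_of_le ht1.1 with h | h
        · exact h
        · exfalso; rw [← h, hz] at hyt1; norm_num at hyt1
      refine core hy hT hTts ht1.1 hI ?_ ?_ ?_ hz hyt1 h68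
      · intro t ht
        constructor
        · rcases lt_or_eq_of_le ht.2 with h | h
          · exact (hyt1 ▸ (hanti t' ⟨ht.1, ht.2.trans ht1.2⟩ ht1 h).le)
          · rw [h, hyt1]
        · rcases lt_or_eq_of_le ht.1 with h | h
          · exact (hyneg t h).le
          · exact le_of_eq (by rw [← h, hz])
      · exact fun t ht => (hall t ht.1).1.le
      · intro t ht
        rcases lt_or_eq_of_le ht.1 with h | h
        · exact hE0 t h
        · rw [← h]; exact hEts
    · -- never reaches -1 : linear decay contradiction
      push_neg at hreach
      set a := y (ts + 1) with hadef
      have haneg : a < 0 := hyneg _ (by linarith)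
      have hage : -1 ≤ a := hreach _ (by linarith)
      have hVa : Vp a < 0 := Vp_neg (ne_of_lt haneg) (by nlinarith)
      set m := -Vp a with hmdef
      have hm : 0 < m := by simp only [hmdef]; linarith
      set c := Real.sqrt (2 * m) with hcdef
      have hc : 0 < c := Real.sqrt_pos.2 (by linarith)
      have hc2 : c ^ 2 = 2 * m := Real.sq_sqrt (by linarith)
      have hvle : ∀ t, ts + 1 ≤ t → deriv y t ≤ -c := by
        intro t ht
        have hyt : y t ≤ a := by
          rcases lt_or_eq_of_le ht with h | h
          · exact (hanti t ⟨by linarith, by linarith⟩ ⟨by linarith, le_rfl⟩ h).le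
          · exact le_of_eq (congrArg y h.symm)
        have hy1 : -1 ≤ y t := hreach t (by linarith)
        have hVle : Vp (y t) ≤ Vp a := Vp_mono_neg hy1 hyt haneg.le
        have hEt : 0 ≤ energy y t := hE0 t (by linarith)
        rw [energy_eq] at hEt
        have hv2 : 2 * m ≤ (deriv y t) ^ 2 := by simp only [hmdef]; nlinarith
        have hvneg : deriv y t < 0 := (hall t (by linarith)).1
        nlinarith [hv2, hc2, hvneg, hc, sq_nonneg (deriv y t + c)]
      -- linear decay
      have hc3 : 0 < 3 / c := by positivity
      have hL : ∀ t : ℝ, 0 < t → HasDerivAt (fun s => y s + c * s) (deriv y t + c) t := by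
        intro t ht
        simpa using (hasDeriv hy ht).fun_add ((hasDerivAt_id t).const_mul c)
      have hdec : AntitoneOn (fun t => y t + c * t) (Ici (ts + 1)) := by
        apply antitoneOn_of_deriv_nonpos (convex_Ici _)
        · intro t ht
          simp only [mem_Ici] at ht
          exact (hL t (by linarith)).continuousAt.continuousWithinAt
        · intro t ht
          rw [interior_Ici] at ht
          simp only [mem_Ioi] at ht
          exact (hL t (by linarith)).differentiableAt.differentiableWithinAt
        · intro t ht
          rw [interior_Ici] at ht
          simp only [mem_Ioi] at ht
          rw [(hL t (by linarith)).deriv]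
          have := hvle t ht.le
          linarith
      have hbad : y (ts + 1 + 3 / c) + c * (ts + 1 + 3 / c) ≤ y (ts + 1) + c * (ts + 1) :=
        hdec self_mem_Ici (mem_Ici.2 (by linarith)) (by linarith)
      have h3c : c * (3 / c) = 3 := by
        rw [mul_comm]
        exact div_mul_cancel₀ 3 hc.ne'
      have hexp2 : c * (ts + 1 + 3 / c) = c * (ts + 1) + c * (3 / c) := by ring
      have hlast : y (ts + 1 + 3 / c) ≤ a - 3 := by linarith [hbad, h3c, hexp2]
      have := hreach (ts + 1 + 3 / c) (by linarith)
      linarith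

lemma sq_le_neg {x α : ℝ} (hα : 0 ≤ α) (hx : x < 0) (h : α ^ 2 ≤ x ^ 2) : x ≤ -α := by
  by_contra h'
  push_neg at h'
  have h1 : 0 < x + α := by linarith
  have h2 : 0 < α - x := by linarith
  nlinarith [mul_pos h1 h2]

lemma lyap_arith {x v α w : ℝ} (hα : 0 < α) (hα1 : α ≤ 1) (hx : x ≤ -α)
    (hx2 : x ^ 2 ≤ 2) (hw : 0 < w) (hw4 : w ≤ 1 / 4) (hw3 : 3 * w ≤ α ^ 2) :
    -v ^ 2 - (x + 1) * (x ^ 3 - x) - 3 * ((x + 1) * v) * w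
      + (α ^ 2 / 4) * ((1 / 2 * v ^ 2 + Vp x) + (x + 1) * v * w + 1 / 4) ≤ 0 := by
  unfold Vp
  have hxa : α ≤ -x := by linarith
  have hg : α ^ 2 ≤ x ^ 2 - x := by nlinarith [mul_le_mul hxa hxa hα.le (by linarith : (0:ℝ) ≤ -x)]
  have hx6 : (x - 1) ^ 2 ≤ 6 := by nlinarith [sq_nonneg (2 * x + 3)]
  have hQ : (0:ℝ) ≤ (x + 1) ^ 2 + v ^ 2 := by positivity
  have hP1 : -((x + 1) * v) ≤ ((x + 1) ^ 2 + v ^ 2) / 2 := by nlinarith [sq_nonneg (x + 1 + v)]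
  have hP2 : (x + 1) * v ≤ ((x + 1) ^ 2 + v ^ 2) / 2 := by nlinarith [sq_nonneg (x + 1 - v)]
  have c0 : α ^ 2 * (x + 1) ^ 2 ≤ (x ^ 2 - x) * (x + 1) ^ 2 :=
    mul_le_mul_of_nonneg_right hg (sq_nonneg _)
  have c1 : -3 * ((x + 1) * v) * w ≤ 3 * w * (((x + 1) ^ 2 + v ^ 2) / 2) := by
    nlinarith [mul_le_mul_of_nonneg_left hP1 (by positivity : (0:ℝ) ≤ 3 * w)]
  have c2 : 3 * w * (((x + 1) ^ 2 + v ^ 2) / 2) ≤ α ^ 2 * (((x + 1) ^ 2 + v ^ 2) / 2) :=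
    mul_le_mul_of_nonneg_right hw3 (by positivity)
  have dP : (x + 1) * v * w ≤ ((x + 1) ^ 2 + v ^ 2) / 8 := by
    have s1 : (x + 1) * v * w ≤ (((x + 1) ^ 2 + v ^ 2) / 2) * w :=
      mul_le_mul_of_nonneg_right hP2 hw.le
    have s2 : (((x + 1) ^ 2 + v ^ 2) / 2) * w ≤ (((x + 1) ^ 2 + v ^ 2) / 2) * (1 / 4) :=
      mul_le_mul_of_nonneg_left hw4 (by positivity)
    linarith
  have d1 : (α ^ 2 / 4) * ((x + 1) * v * w) ≤ (α ^ 2 / 4) * (((x + 1) ^ 2 + v ^ 2) / 8) :=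
    mul_le_mul_of_nonneg_left dP (by positivity)
  have hE4 : (1 / 4) * x ^ 4 - (1 / 2) * x ^ 2 + 1 / 4 ≤ (3 / 2) * (x + 1) ^ 2 := by
    have key : (x + 1) ^ 2 * (x - 1) ^ 2 ≤ (x + 1) ^ 2 * 6 :=
      mul_le_mul_of_nonneg_left hx6 (sq_nonneg _)
    nlinarith [key]
  have d2 : (α ^ 2 / 4) * (1 / 2 * v ^ 2 + ((1 / 4) * x ^ 4 - (1 / 2) * x ^ 2) + 1 / 4)
      ≤ (α ^ 2 / 4) * (1 / 2 * v ^ 2 + (3 / 2) * (x + 1) ^ 2) :=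
    mul_le_mul_of_nonneg_left (by linarith) (by positivity)
  have hα2 : α ^ 2 ≤ 1 := by nlinarith
  have e1 : α ^ 2 * v ^ 2 ≤ v ^ 2 := by
    nlinarith [mul_le_mul_of_nonneg_right hα2 (sq_nonneg v)]
  have e2 : 0 ≤ α ^ 2 * (x + 1) ^ 2 := by positivity
  nlinarith [c0, c1, c2, d1, d2, e1, e2]

lemma lyap_lower {x v w : ℝ} (hx : x < 0) (hw : 0 < w) (hw4 : w ≤ 1 / 4) :
    (x + 1) ^ 2 ≤ 8 * ((1 / 2 * v ^ 2 + Vp x) + (x + 1) * v * w + 1 / 4) := by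
  unfold Vp
  have h1 : (1:ℝ) ≤ (x - 1) ^ 2 := by nlinarith
  have h2 : (x + 1) ^ 2 * 1 ≤ (x + 1) ^ 2 * (x - 1) ^ 2 :=
    mul_le_mul_of_nonneg_left h1 (sq_nonneg _)
  have hP1 : -((x + 1) * v) ≤ ((x + 1) ^ 2 + v ^ 2) / 2 := by nlinarith [sq_nonneg (x + 1 + v)]
  have s1 : -((x + 1) * v) * w ≤ (((x + 1) ^ 2 + v ^ 2) / 2) * w :=
    mul_le_mul_of_nonneg_right hP1 hw.le
  have s2 : (((x + 1) ^ 2 + v ^ 2) / 2) * w ≤ (((x + 1) ^ 2 + v ^ 2) / 2) * (1 / 4) :=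
    mul_le_mul_of_nonneg_left hw4 (by positivity)
  nlinarith [h2, s1, s2]

/-- derivative of the Lyapunov auxiliary function `H = E + (y+1)y'/t` -/
lemma hasDerivAt_H (hy : IsSolution b y) {t : ℝ} (ht : 0 < t) :
    HasDerivAt (fun s => energy y s + (y s + 1) * deriv y s / s)
      (-(2 / t) * (deriv y t) ^ 2
        + ((deriv y t * deriv y t + (y t + 1) * deriv (deriv y) t) * t
          - (y t + 1) * deriv y t) / t ^ 2) t := by
  have Hy := hasDeriv hy ht
  have Hv := hasDeriv2 hy ht
  have h1 : HasDerivAt (fun s => (y s + 1) * deriv y s)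
      (deriv y t * deriv y t + (y t + 1) * deriv (deriv y) t) t := (Hy.add_const 1).mul Hv
  have h2 := h1.fun_div (hasDerivAt_id t) (ne_of_gt ht)
  have h3 := (hasDerivAt_energy hy ht).fun_add h2
  refine h3.congr_deriv ?_
  simp only [id_eq, mul_one]

/-- The tail lemma: once the energy is negative (with `y` negative), the solution stays
negative and converges to `-1`. -/
lemma tail (hy : IsSolution b y) {t₂ : ℝ} (ht2 : 0 < t₂)
    (hE2 : energy y t₂ < 0) (hy2 : y t₂ < 0) :
    (∀ t, t₂ ≤ t → y t < 0) ∧ Filter.Tendsto y Filter.atTop (nhds (-1)) := by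
  have hEle : ∀ t, t₂ ≤ t → energy y t ≤ energy y t₂ := fun t ht =>
    energy_anti hy ht2 self_mem_Ici (mem_Ici.2 ht) ht
  have hVle : ∀ t, t₂ ≤ t → Vp (y t) ≤ energy y t₂ := fun t ht =>
    (Vp_le_energy y t).trans (hEle t ht)
  have hyne : ∀ t, t₂ ≤ t → y t ≠ 0 := by
    intro t ht h0
    have := hVle t ht
    rw [h0, Vp_zero] at this
    linarith
  have hyneg : ∀ t, t₂ ≤ t → y t < 0 := by
    intro t ht
    exact neg_on_of_no_zero (contOn_y hy ht2) (fun s hs => hyne s hs.1) hy2 t ⟨ht, le_rfl⟩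
  refine ⟨hyneg, ?_⟩
  have hε : 0 < -energy y t₂ := by linarith
  have hε4 : -energy y t₂ ≤ 1 / 4 := by
    have h1 := neg_quarter_le_Vp (y t₂)
    have h2 := Vp_le_energy y t₂
    linarith
  set r := Real.sqrt (1 - 4 * (-energy y t₂)) with hrdef
  have hr0 : 0 ≤ r := Real.sqrt_nonneg _
  have hr2 : r ^ 2 = 1 - 4 * (-energy y t₂) := Real.sq_sqrt (by linarith)
  have hr1 : r < 1 := by
    by_contra h
    push_neg at h
    nlinarith [mul_le_mul h h (by norm_num : (0:ℝ) ≤ 1) (le_trans zero_le_one h)]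
  set α := Real.sqrt (1 - r) with hαdef
  have hα0 : 0 < α := Real.sqrt_pos.2 (by linarith)
  have hα2 : α ^ 2 = 1 - r := Real.sq_sqrt (by linarith)
  have hα1 : α ≤ 1 := by
    by_contra h
    push_neg at h
    nlinarith [mul_lt_mul h h.le one_pos (by linarith : (0:ℝ) ≤ α)]
  -- trapping
  have htrap : ∀ t, t₂ ≤ t → y t ≤ -α ∧ (y t) ^ 2 ≤ 2 := by
    intro t ht
    have hV := hVle t ht
    have hsq : ((y t) ^ 2 - 1) ^ 2 ≤ r ^ 2 := by
      unfold Vp at hV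
      nlinarith [hr2]
    have hup : (y t) ^ 2 ≤ 1 + r := by nlinarith [hsq, hr0]
    have hlow : 1 - r ≤ (y t) ^ 2 := by nlinarith [hsq, hr0]
    exact ⟨sq_le_neg hα0.le (hyneg t ht) (by nlinarith [hα2]), by nlinarith [hr1]⟩
  set k := α ^ 2 / 4 with hkdef
  have hk : 0 < k := by positivity
  set t₃ := max (max t₂ 4) (3 / α ^ 2) with ht₃def
  have ht₃2 : t₂ ≤ t₃ := le_trans (le_max_left _ _) (le_max_left _ _)
  have ht₃4 : (4:ℝ) ≤ t₃ := le_trans (le_max_right t₂ 4) (le_max_left _ _)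
  have ht₃α : 3 / α ^ 2 ≤ t₃ := le_max_right _ _
  have ht₃p : 0 < t₃ := by linarith
  -- pointwise differential inequality
  have hkey : ∀ t, t₃ ≤ t →
      t * (-(2 / t) * (deriv y t) ^ 2
        + ((deriv y t * deriv y t + (y t + 1) * deriv (deriv y) t) * t
          - (y t + 1) * deriv y t) / t ^ 2)
        + k * ((energy y t + (y t + 1) * deriv y t / t) + 1 / 4) ≤ 0 := by
    intro t ht'
    have htp : 0 < t := lt_of_lt_of_le ht₃p ht'
    have htne : t ≠ 0 := ne_of_gt htp
    have ht2t : t₂ ≤ t := le_trans ht₃2 ht'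
    obtain ⟨hx1, hx2⟩ := htrap t ht2t
    have hw : (0:ℝ) < 1 / t := by positivity
    have hw4 : 1 / t ≤ 1 / 4 := by
      apply div_le_div_of_nonneg_left (by norm_num) (by norm_num) (by linarith)
    have hw3 : 3 * (1 / t) ≤ α ^ 2 := by
      rw [mul_one_div]
      rw [div_le_iff₀ htp]
      have h1 : 3 / α ^ 2 ≤ t := le_trans ht₃α ht'
      rw [div_le_iff₀ (by positivity : (0:ℝ) < α ^ 2)] at h1
      linarith
    have harith := lyap_arith hα0 hα1 hx1 hx2 hw hw4 hw3 (v := deriv y t)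
    rw [ode hy htp, energy_eq]
    have hEq : t * (-(2 / t) * (deriv y t) ^ 2
        + ((deriv y t * deriv y t
            + (y t + 1) * (-((2 / t) * deriv y t) - ((y t) ^ 3 - y t))) * t
          - (y t + 1) * deriv y t) / t ^ 2)
        + k * ((1 / 2 * (deriv y t) ^ 2 + Vp (y t) + (y t + 1) * deriv y t / t) + 1 / 4)
        = -(deriv y t) ^ 2 - (y t + 1) * ((y t) ^ 3 - y t)
          - 3 * ((y t + 1) * deriv y t) * (1 / t)
          + (α ^ 2 / 4) * ((1 / 2 * (deriv y t) ^ 2 + Vp (y t))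
            + (y t + 1) * deriv y t * (1 / t) + 1 / 4) := by
      rw [hkdef]
      field_simp
      ring
    rw [hEq]
    exact harith
  -- the Lyapunov function G is antitone
  have hDG : ∀ t, 0 < t → HasDerivAt
      (fun s => ((energy y s + (y s + 1) * deriv y s / s) + 1 / 4) * s ^ k)
      ((-(2 / t) * (deriv y t) ^ 2
        + ((deriv y t * deriv y t + (y t + 1) * deriv (deriv y) t) * t
          - (y t + 1) * deriv y t) / t ^ 2) * t ^ k
        + ((energy y t + (y t + 1) * deriv y t / t) + 1 / 4) * (k * t ^ (k - 1))) t := by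
    intro t htp
    exact ((hasDerivAt_H hy htp).add_const (1 / 4)).mul
      (Real.hasDerivAt_rpow_const (Or.inl (ne_of_gt htp)))
  have hGanti : AntitoneOn
      (fun s => ((energy y s + (y s + 1) * deriv y s / s) + 1 / 4) * s ^ k) (Ici t₃) := by
    apply antitoneOn_of_deriv_nonpos (convex_Ici _)
    · intro t ht
      exact (hDG t (lt_of_lt_of_le ht₃p ht)).continuousAt.continuousWithinAt
    · intro t ht
      rw [interior_Ici] at ht
      exact (hDG t (lt_of_lt_of_le ht₃p ht.le)).differentiableAt.differentiableWithinAt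
    · intro t ht
      rw [interior_Ici] at ht
      have htp : 0 < t := lt_of_lt_of_le ht₃p ht.le
      rw [(hDG t htp).deriv]
      have hsplit : t ^ (k - 1) = t ^ k / t := by
        rw [Real.rpow_sub htp, Real.rpow_one]
      rw [hsplit]
      have hfac : (-(2 / t) * (deriv y t) ^ 2
          + ((deriv y t * deriv y t + (y t + 1) * deriv (deriv y) t) * t
            - (y t + 1) * deriv y t) / t ^ 2) * t ^ k
          + ((energy y t + (y t + 1) * deriv y t / t) + 1 / 4) * (k * (t ^ k / t))
          = (t ^ k / t) * (t * (-(2 / t) * (deriv y t) ^ 2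
            + ((deriv y t * deriv y t + (y t + 1) * deriv (deriv y) t) * t
              - (y t + 1) * deriv y t) / t ^ 2)
            + k * ((energy y t + (y t + 1) * deriv y t / t) + 1 / 4)) := by
        field_simp
      rw [hfac]
      apply mul_nonpos_of_nonneg_of_nonpos
      · positivity
      · exact hkey t ht.le
  -- the pointwise lower bound
  have hHlow : ∀ t, t₃ ≤ t →
      (y t + 1) ^ 2 ≤ 8 * ((energy y t + (y t + 1) * deriv y t / t) + 1 / 4) := by
    intro t ht'
    have htp : 0 < t := lt_of_lt_of_le ht₃p ht'
    have hw : (0:ℝ) < 1 / t := by positivity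
    have hw4 : 1 / t ≤ 1 / 4 := by
      apply div_le_div_of_nonneg_left (by norm_num) (by norm_num) (by linarith)
    have h := lyap_lower (v := deriv y t) (hyneg t (le_trans ht₃2 ht')) hw hw4
    rw [energy_eq]
    have hEq : (y t + 1) * deriv y t / t = (y t + 1) * deriv y t * (1 / t) := by ring
    rw [hEq]
    linarith [h]
  -- conclude: (y+1)² → 0
  set G₃ := ((energy y t₃ + (y t₃ + 1) * deriv y t₃ / t₃) + 1 / 4) * t₃ ^ k with hG₃def
  have hfin : ∀ t, t₃ ≤ t → (y t + 1) ^ 2 ≤ (8 * G₃) * t ^ (-k) := by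
    intro t ht'
    have htp : 0 < t := lt_of_lt_of_le ht₃p ht'
    have htk : (0:ℝ) < t ^ k := Real.rpow_pos_of_pos htp k
    have hGle : ((energy y t + (y t + 1) * deriv y t / t) + 1 / 4) * t ^ k ≤ G₃ :=
      hGanti self_mem_Ici (mem_Ici.2 ht') ht'
    have h1 : (y t + 1) ^ 2 * t ^ k ≤ 8 * G₃ := by
      calc (y t + 1) ^ 2 * t ^ k
          ≤ (8 * ((energy y t + (y t + 1) * deriv y t / t) + 1 / 4)) * t ^ k :=
            mul_le_mul_of_nonneg_right (hHlow t ht') htk.le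
        _ = 8 * (((energy y t + (y t + 1) * deriv y t / t) + 1 / 4) * t ^ k) := by ring
        _ ≤ 8 * G₃ := by linarith [hGle]
    rw [← le_div_iff₀ htk] at h1
    rw [Real.rpow_neg htp.le]
    calc (y t + 1) ^ 2 ≤ 8 * G₃ / t ^ k := h1
      _ = 8 * G₃ * (t ^ k)⁻¹ := by ring
  have hsq0 : Filter.Tendsto (fun t => (y t + 1) ^ 2) Filter.atTop (nhds 0) := by
    apply squeeze_zero' (Filter.Eventually.of_forall (fun t => sq_nonneg _))
    · exact (Filter.eventually_ge_atTop t₃).mono (fun t ht => hfin t ht)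
    · have h := (tendsto_rpow_neg_atTop hk).const_mul (8 * G₃)
      simpa using h
  have habs : Filter.Tendsto (fun t => |y t + 1|) Filter.atTop (nhds 0) := by
    have h := (Real.continuous_sqrt.tendsto 0).comp hsq0
    simp only [Function.comp_def, Real.sqrt_sq_eq_abs, Real.sqrt_zero] at h
    exact h
  rw [tendsto_iff_dist_tendsto_zero]
  simp only [Real.dist_eq, sub_neg_eq_add]
  exact habs

end CrossKit

open CrossKit Set Filter in
theorem cross_over_get_trapped (b : ℝ) (y : ℝ → ℝ) (hy : IsSolution b y)
    (T : ℝ) (hT : 0 < T)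
    (h1 : 0 ≤ y T) (h2 : y T < 1 / 2)
    (h3 : deriv y T < 0)
    (h4 : 0 < energy y T) (h5 : energy y T < 1 / 4)
    (h6 : energy y T * (T - 2 * Real.log (energy y T) + 3 / 2) < 3 / 8) :
    ∀ t₀ : ℝ, T ≤ t₀ → y t₀ = 0 →
      Filter.Tendsto y Filter.atTop (nhds (-1)) ∧
      ∀ t : ℝ, t₀ < t → y t ≠ 0 := by
  intro t₀ ht₀ hyt₀
  have hlog : Real.log (energy y T) < 0 := Real.log_neg h4 (by linarith)
  have h68 : T * energy y T < 3 / 8 := by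
    have hmul : energy y T * T ≤ energy y T * (T - 2 * Real.log (energy y T) + 3 / 2) :=
      mul_le_mul_of_nonneg_left (by linarith) h4.le
    linarith [hmul]
  -- the first zero at or after T
  set Z : Set ℝ := Ici T ∩ y ⁻¹' {0} with hZdef
  have hZc : IsClosed Z :=
    ContinuousOn.preimage_isClosed_of_isClosed
      (fun t ht => (contAt hy (lt_of_lt_of_le hT ht)).continuousWithinAt)
      isClosed_Ici isClosed_singleton
  have ht₀Z : t₀ ∈ Z := ⟨mem_Ici.2 ht₀, by simp [hyt₀]⟩
  have hZne : Z.Nonempty := ⟨t₀, ht₀Z⟩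
  have hZbd : BddBelow Z := ⟨T, fun z hz => hz.1⟩
  set ts := sInf Z with htsdef
  have htsZ : ts ∈ Z := hZc.csInf_mem hZne hZbd
  have hTts : T ≤ ts := htsZ.1
  have hzts : y ts = 0 := htsZ.2
  have hts_le : ts ≤ t₀ := csInf_le hZbd ht₀Z
  have hmin : ∀ t ∈ Ico T ts, y t ≠ 0 := fun t ht h0 =>
    absurd (csInf_le hZbd ⟨mem_Ici.2 ht.1, by simp [h0]⟩) (not_le.2 ht.2)
  obtain ⟨t₂, ht₂gt, hEt₂, hyneg2⟩ := keyLemma hy hT hTts h1 h2 h3 h68 hzts hmin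
  have ht₂p : 0 < t₂ := lt_trans (lt_of_lt_of_le hT hTts) ht₂gt
  obtain ⟨htail1, htail2⟩ := tail hy ht₂p hEt₂ (hyneg2 t₂ ht₂gt le_rfl)
  have hallneg : ∀ t, ts < t → y t < 0 := by
    intro t ht
    rcases le_or_gt t t₂ with h | h
    · exact hyneg2 t ht h
    · exact htail1 t h.le
  have ht₀eq : t₀ = ts := by
    rcases lt_or_eq_of_le hts_le with h | h
    · exact absurd hyt₀ (ne_of_lt (hallneg t₀ h))
    · exact h.symm
  exact ⟨htail2, fun t ht => ne_of_lt (hallneg t (ht₀eq ▸ ht))⟩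
end
end

section
/- If 0 < b ≤ √2 (equivalently V(b) ≤ 0 with b > 0) and y_b is not identically zero, then E(t) < 0 for all t > 0, and (y_b(t), ẏ_b(t)) → (1, 0) as t → ∞; in particular inf_{t>0} y_b(t) > 0, so y_b has no zeros. -/
open Real Filter Set

noncomputable section

section Aux
variable {b : ℝ} {y : ℝ → ℝ}

lemma energy_hasDerivAt (hy : IsSolution b y) {t : ℝ} (ht : 0 < t) :
    HasDerivAt (energy y) (-(2 / t) * (deriv y t) ^ 2) t := by
  have h1 : HasDerivAt y (deriv y t) t := (hy.2.2.1 t ht.le).hasDerivAt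
  have h2 : HasDerivAt (deriv y) (deriv (deriv y) t) t := (hy.2.2.2.1 t ht).hasDerivAt
  have hode := hy.2.2.2.2 t ht
  have h3 : HasDerivAt (fun s => (1/2) * (deriv y s) ^ 2 + (1/4) * (y s) ^ 4 - (1/2) * (y s)^2)
      ((1/2) * ((2:ℕ) * (deriv y t) ^ 1 * deriv (deriv y) t)
        + (1/4) * ((4:ℕ) * (y t) ^ 3 * deriv y t) - (1/2) * ((2:ℕ) * (y t) ^ 1 * deriv y t)) t :=
    (((h2.pow 2).const_mul _).add ((h1.pow 4).const_mul _)).sub ((h1.pow 2).const_mul _)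
  have : energy y = fun s => (1/2) * (deriv y s) ^ 2 + (1/4) * (y s) ^ 4 - (1/2) * (y s)^2 := rfl
  rw [this]
  convert h3 using 1
  have hw : deriv (deriv y) t = -((2/t) * deriv y t + ((y t)^3 - y t)) := by linarith
  rw [hw]; push_cast; ring

lemma energy_antitoneOn (hy : IsSolution b y) : AntitoneOn (energy y) (Set.Ioi 0) := by
  apply antitoneOn_of_deriv_nonpos (convex_Ioi 0)
  · intro t ht
    exact (energy_hasDerivAt hy ht).continuousAt.continuousWithinAt
  · intro t ht
    rw [interior_Ioi] at ht
    exact (energy_hasDerivAt hy ht).differentiableAt.differentiableWithinAt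
  · intro t ht
    rw [interior_Ioi] at ht
    rw [(energy_hasDerivAt hy ht).deriv]
    have h2t : (0:ℝ) < 2 / t := div_pos two_pos ht
    nlinarith [sq_nonneg (deriv y t)]

lemma energy_le_aux (E : ℝ → ℝ) (hy : y 0 = b) (hd : DifferentiableAt ℝ y 0) (hd0 : deriv y 0 = 0)
    (hdiff : ∀ t : ℝ, 0 ≤ t → DifferentiableAt ℝ y t)
    (hanti : AntitoneOn E (Set.Ioi 0))
    (hEform : ∀ s, E s = (1/2) * (deriv y s)^2 + ((1/4) * (y s)^4 - (1/2)*(y s)^2))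
    {t : ℝ} (ht : 0 < t) :
    E t ≤ (1/4) * b^4 - (1/2) * b^2 := by
  by_contra hcon
  push_neg at hcon
  obtain ⟨ε, hεpos, hεdef⟩ : ∃ ε : ℝ, 0 < ε ∧ E t = (1/4)*b^4 - (1/2)*b^2 + ε :=
    ⟨E t - ((1/4)*b^4 - (1/2)*b^2), by linarith, by ring⟩
  have hy0 : ContinuousAt y 0 := hd.continuousAt
  have hC : ContinuousAt (fun s => (1/4)*(y s)^4 - (1/2)*(y s)^2) 0 :=
    ((hy0.pow 4).const_mul (1/4:ℝ)).sub ((hy0.pow 2).const_mul (1/2:ℝ))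
  have hev : ∀ᶠ s in nhds (0:ℝ), |((1/4)*(y s)^4 - (1/2)*(y s)^2) - ((1/4)*b^4 - (1/2)*b^2)| < ε/2 := by
    have h2 := hC.tendsto.eventually (eventually_abs_sub_lt _ (half_pos hεpos))
    simpa [hy] using h2
  obtain ⟨δ₁, hδ₁pos, hδ₁⟩ := Metric.eventually_nhds_iff.mp hev
  have hd0' : HasDerivAt y 0 0 := by
    have := hd.hasDerivAt; rwa [hd0] at this
  have hslope : Tendsto (slope y 0) (nhdsWithin 0 {(0:ℝ)}ᶜ) (nhds 0) :=
    hasDerivAt_iff_tendsto_slope.mp hd0'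
  have hev2 : ∀ᶠ s in nhdsWithin (0:ℝ) (Set.Ioi 0), |slope y 0 s| < Real.sqrt ε := by
    have h2 : ∀ᶠ s in nhdsWithin (0:ℝ) {(0:ℝ)}ᶜ, |slope y 0 s| < Real.sqrt ε := by
      have := hslope.eventually (eventually_abs_sub_lt 0 (Real.sqrt_pos.mpr hεpos))
      simpa using this
    exact h2.filter_mono (nhdsWithin_mono _ (fun x hx => ne_of_gt hx))
  have hev3 : ∀ᶠ s in nhdsWithin (0:ℝ) (Set.Ioi 0), s < min δ₁ t ∧ s ∈ Set.Ioi 0 := by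
    filter_upwards [Ioo_mem_nhdsGT_of_mem (Set.left_mem_Ico.mpr (lt_min hδ₁pos ht)),
      self_mem_nhdsWithin] with s hs hs'
    exact ⟨hs.2, hs'⟩
  obtain ⟨δ, hδ1, hδlt, hδpos⟩ := (hev2.and hev3).exists
  obtain ⟨c, hc, hceq⟩ := exists_hasDerivAt_eq_slope y (deriv y) (hδpos : (0:ℝ) < δ)
    (fun s hs => (hdiff s hs.1).continuousAt.continuousWithinAt)
    (fun s hs => (hdiff s hs.1.le).hasDerivAt)
  have hslopec : deriv y c = slope y 0 δ := by
    rw [hceq, slope_def_field]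
  have hc1 : |deriv y c| < Real.sqrt ε := by rw [hslopec]; exact hδ1
  have hc2 : (deriv y c)^2 < ε := by
    have h4 : (deriv y c)^2 < (Real.sqrt ε)^2 := by
      nlinarith [hc1, abs_nonneg (deriv y c), sq_abs (deriv y c), Real.sqrt_nonneg ε]
    rwa [Real.sq_sqrt hεpos.le] at h4
  have hc3 : |((1/4)*(y c)^4 - (1/2)*(y c)^2) - ((1/4)*b^4 - (1/2)*b^2)| < ε/2 := by
    apply hδ₁
    rw [Real.dist_eq, sub_zero, abs_of_pos hc.1]
    exact lt_of_lt_of_le (hc.2.trans hδlt) (min_le_left _ _)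
  have hEc : E c < (1/4)*b^4 - (1/2)*b^2 + ε := by
    obtain ⟨h5, h6⟩ := abs_lt.mp hc3
    rw [hEform c]
    linarith
  have hct : c < t := hc.2.trans (hδlt.trans_le (min_le_right _ _))
  have hle := hanti (Set.mem_Ioi.mpr hc.1) (Set.mem_Ioi.mpr ht) hct.le
  linarith
lemma energy_neg_aux (E : ℝ → ℝ) (hb0 : 0 < b) (hb : b ≤ Real.sqrt 2)
    (hy0 : y 0 = b)
    (hdiff : ∀ t : ℝ, 0 ≤ t → DifferentiableAt ℝ y t)
    (hode : ∀ t : ℝ, 0 < t →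
      deriv (deriv y) t + (2 / t) * deriv y t + ((y t) ^ 3 - y t) = 0)
    (hanti : AntitoneOn E (Set.Ioi 0))
    (hEderiv : ∀ t : ℝ, 0 < t → deriv E t = -(2/t) * (deriv y t)^2)
    (hle : ∀ t : ℝ, 0 < t → E t ≤ (1/4) * b^4 - (1/2) * b^2)
    {t₀ : ℝ} (ht₀ : 0 < t₀) : E t₀ < 0 := by
  by_contra hcon
  push_neg at hcon
  have hb2 : b^2 ≤ 2 := by
    nlinarith [Real.sq_sqrt (by norm_num : (0:ℝ) ≤ 2), Real.sqrt_nonneg 2]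
  have hVb : (1/4) * b^4 - (1/2) * b^2 ≤ 0 := by nlinarith
  have hE0 : E t₀ = 0 := le_antisymm (le_trans (hle t₀ ht₀) hVb) hcon
  have hVb0 : (1/4) * b^4 - (1/2) * b^2 = 0 := le_antisymm hVb (hE0 ▸ hle t₀ ht₀)
  have hEzero : ∀ s ∈ Set.Ioo (0:ℝ) t₀, E s = 0 := by
    intro s hs
    have h1 := hanti (Set.mem_Ioi.mpr hs.1) (Set.mem_Ioi.mpr ht₀) hs.2.le
    have h2 := hle s hs.1
    rw [hVb0] at h2
    rw [hE0] at h1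
    linarith
  have hy'zero : ∀ s ∈ Set.Ioo (0:ℝ) t₀, deriv y s = 0 := by
    intro s hs
    have hEd : deriv E s = 0 := by
      have hev : E =ᶠ[nhds s] (fun _ => (0:ℝ)) := by
        filter_upwards [isOpen_Ioo.mem_nhds hs] with u hu
        exact hEzero u hu
      rw [hev.deriv_eq, deriv_const]
    rw [hEderiv s hs.1] at hEd
    have h2s : (0:ℝ) < 2 / s := div_pos two_pos hs.1
    have h9 : deriv y s ^ 2 = 0 := by
      rcases mul_eq_zero.mp hEd with h | h
      · exact absurd h (neg_neg_of_pos h2s).ne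
      · exact h
    exact pow_eq_zero_iff (by norm_num) |>.mp h9
  have key : ∀ s u : ℝ, s ∈ Set.Ioo (0:ℝ) t₀ → u ∈ Set.Ioo (0:ℝ) t₀ → s ≤ u → y s = y u := by
    intro s u hs hu hsu
    have hcont : ContinuousOn y (Set.Icc s u) := fun x hx =>
      (hdiff x (hs.1.le.trans hx.1)).continuousAt.continuousWithinAt
    have hdiff' : DifferentiableOn ℝ y (interior (Set.Icc s u)) := by
      rw [interior_Icc]
      exact fun x hx => (hdiff x (hs.1.trans hx.1).le).differentiableWithinAt
    have hder0 : ∀ x ∈ interior (Set.Icc s u), deriv y x = 0 := by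
      rw [interior_Icc]
      exact fun x hx => hy'zero x ⟨hs.1.trans hx.1, hx.2.trans hu.2⟩
    have h1 := antitoneOn_of_deriv_nonpos (convex_Icc s u) hcont hdiff'
      (fun x hx => (hder0 x hx).le) (Set.mem_Icc.mpr ⟨le_rfl, hsu⟩) (Set.mem_Icc.mpr ⟨hsu, le_rfl⟩) hsu
    have h2 := monotoneOn_of_deriv_nonneg (convex_Icc s u) hcont hdiff'
      (fun x hx => (hder0 x hx).ge) (Set.mem_Icc.mpr ⟨le_rfl, hsu⟩) (Set.mem_Icc.mpr ⟨hsu, le_rfl⟩) hsu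
    exact le_antisymm h2 h1
  have hmem : (t₀/2) ∈ Set.Ioo (0:ℝ) t₀ := ⟨by linarith, by linarith⟩
  have hyconst : ∀ s ∈ Set.Ioo (0:ℝ) t₀, y s = y (t₀/2) := by
    intro s hs
    rcases le_total s (t₀/2) with h | h
    · exact key s _ hs hmem h
    · exact (key _ s hmem hs h).symm
  -- the constant equals b
  have hvb : y (t₀/2) = b := by
    have h1 : Tendsto y (nhdsWithin 0 (Set.Ioi 0)) (nhds b) := by
      have := (hdiff 0 le_rfl).continuousAt.continuousWithinAt (s := Set.Ioi 0)
      rwa [ContinuousWithinAt, hy0] at this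
    have h2 : y =ᶠ[nhdsWithin 0 (Set.Ioi 0)] (fun _ => y (t₀/2)) := by
      filter_upwards [Ioo_mem_nhdsGT_of_mem (Set.left_mem_Ico.mpr ht₀)] with u hu
      exact hyconst u hu
    have h3 : Tendsto (fun _ : ℝ => y (t₀/2)) (nhdsWithin 0 (Set.Ioi 0)) (nhds b) :=
      h1.congr' h2
    exact tendsto_nhds_unique tendsto_const_nhds h3
  -- second derivative is zero at t₀/2
  have hdd : deriv (deriv y) (t₀/2) = 0 := by
    have hev : deriv y =ᶠ[nhds (t₀/2)] (fun _ => (0:ℝ)) := by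
      filter_upwards [isOpen_Ioo.mem_nhds hmem] with u hu
      exact hy'zero u hu
    rw [hev.deriv_eq, deriv_const]
  have hodeval := hode (t₀/2) hmem.1
  rw [hdd, hy'zero _ hmem, hvb] at hodeval
  have hb1 : b = 1 := by nlinarith
  rw [hb1] at hVb0
  norm_num at hVb0
lemma pos_aux (E : ℝ → ℝ) (hb0 : 0 < b) (hy0 : y 0 = b)
    (hdiff : ∀ t : ℝ, 0 ≤ t → DifferentiableAt ℝ y t)
    (hEform : ∀ s, E s = (1/2) * (deriv y s)^2 + ((1/4) * (y s)^4 - (1/2)*(y s)^2))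
    (hneg : ∀ t : ℝ, 0 < t → E t < 0) :
    (∀ t : ℝ, 0 ≤ t → 0 < y t) ∧ (∀ t : ℝ, 0 < t → (y t)^2 < 2) := by
  have hne : ∀ t : ℝ, 0 ≤ t → y t ≠ 0 := by
    intro t ht h0
    rcases eq_or_lt_of_le ht with h | h
    · rw [← h, hy0] at h0; exact hb0.ne' h0
    · have := hneg t h
      rw [hEform t, h0] at this
      nlinarith [sq_nonneg (deriv y t)]
  constructor
  · intro t ht
    rcases (hne t ht).lt_or_gt with h | h
    · exfalso
      have ht' : 0 < t := by
        rcases eq_or_lt_of_le ht with h' | h'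
        · rw [← h', hy0] at h; exact absurd h (not_lt.mpr hb0.le)
        · exact h'
      have hcont : ContinuousOn y (Set.Icc 0 t) := fun x hx =>
        (hdiff x hx.1).continuousAt.continuousWithinAt
      have h0mem : (0:ℝ) ∈ Set.Icc (y t) (y 0) := by
        rw [hy0]; exact ⟨h.le, hb0.le⟩
      obtain ⟨s, hs, hys⟩ := intermediate_value_Icc' ht hcont h0mem
      exact hne s hs.1 hys
    · exact h
  · intro t ht
    have := hneg t ht
    rw [hEform t] at this
    nlinarith [sq_nonneg (deriv y t), sq_nonneg ((y t)^2)]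

lemma lower_bound_aux (E : ℝ → ℝ)
    (hdiff : ∀ t : ℝ, 0 ≤ t → DifferentiableAt ℝ y t)
    (hEform : ∀ s, E s = (1/2) * (deriv y s)^2 + ((1/4) * (y s)^4 - (1/2)*(y s)^2))
    (hanti : AntitoneOn E (Set.Ioi 0))
    (hneg : ∀ t : ℝ, 0 < t → E t < 0)
    (hpos : ∀ t : ℝ, 0 ≤ t → 0 < y t) :
    ∃ c : ℝ, 0 < c ∧ ∀ t : ℝ, 0 < t → c ≤ y t := by
  have hcont : ContinuousOn y (Set.Icc 0 1) := fun x hx =>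
    (hdiff x hx.1).continuousAt.continuousWithinAt
  obtain ⟨x₀, hx₀mem, hx₀⟩ := (isCompact_Icc (a := (0:ℝ)) (b := 1)).exists_isMinOn
    (Set.nonempty_Icc.mpr zero_le_one) hcont
  set ε := -E 1 with hε
  have hεpos : 0 < ε := by simp [hε]; exact hneg 1 one_pos
  refine ⟨min (y x₀) (Real.sqrt (2*ε)), lt_min (hpos x₀ hx₀mem.1) (Real.sqrt_pos.mpr (by linarith)), ?_⟩
  intro t ht
  rcases le_total t 1 with h | h
  · exact le_trans (min_le_left _ _) (hx₀ ⟨ht.le, h⟩)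
  · refine le_trans (min_le_right _ _) ?_
    have hEt : E t ≤ -ε := by
      have := hanti (Set.mem_Ioi.mpr one_pos) (Set.mem_Ioi.mpr (by linarith : (0:ℝ) < t)) h
      simpa [hε] using this
    rw [hEform t] at hEt
    have hyt := hpos t (by linarith)
    have h2 : 2*ε ≤ (y t)^2 := by nlinarith [sq_nonneg (deriv y t), sq_nonneg ((y t)^2 - 2)]
    calc Real.sqrt (2*ε) ≤ Real.sqrt ((y t)^2) := Real.sqrt_le_sqrt h2
      _ = y t := Real.sqrt_sq hyt.le

lemma bdd_below_aux (E : ℝ → ℝ)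
    (hEform : ∀ s, E s = (1/2) * (deriv y s)^2 + ((1/4) * (y s)^4 - (1/2)*(y s)^2)) :
    ∀ t : ℝ, -(1/4) ≤ E t := by
  intro t
  rw [hEform t]
  nlinarith [sq_nonneg (deriv y t), sq_nonneg ((y t)^2 - 1)]

lemma limit_aux (E : ℝ → ℝ) (hanti : AntitoneOn E (Set.Ioi 0))
    (hbdd : ∀ t : ℝ, -(1/4) ≤ E t) :
    ∃ L : ℝ, -(1/4) ≤ L ∧ (∀ t : ℝ, 1 ≤ t → L ≤ E t) ∧
      Tendsto E atTop (nhds L) := by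
  set F : ℝ → ℝ := fun t => E (max t 1) with hF
  have hFanti : Antitone F := by
    intro s t hst
    exact hanti (Set.mem_Ioi.mpr (lt_of_lt_of_le one_pos (le_max_right s 1)))
      (Set.mem_Ioi.mpr (lt_of_lt_of_le one_pos (le_max_right t 1)))
      (max_le_max hst le_rfl)
  have hFbdd : BddBelow (Set.range F) := by
    refine ⟨-(1/4), ?_⟩
    rintro x ⟨t, rfl⟩
    exact hbdd _
  have hlim := tendsto_atTop_ciInf hFanti hFbdd
  refine ⟨⨅ i, F i, ?_, ?_, ?_⟩
  · exact le_ciInf fun t => hbdd _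
  · intro t ht
    have : F t = E t := by rw [hF]; simp [max_eq_left ht]
    rw [← this]
    exact ciInf_le hFbdd t
  · apply hlim.congr'
    filter_upwards [eventually_ge_atTop (1:ℝ)] with t ht
    rw [hF]; simp [max_eq_left ht]
-- Lipschitz bound for f(u) = u^3 - u on [0, sqrt 2]
lemma lip_aux {u v : ℝ} (hu0 : 0 ≤ u) (hu2 : u^2 ≤ 2) (hv0 : 0 ≤ v) (hv2 : v^2 ≤ 2) :
    |(u^3 - u) - (v^3 - v)| ≤ 7 * |u - v| := by
  have h1 : (u^3 - u) - (v^3 - v) = (u - v) * (u^2 + u*v + v^2 - 1) := by ring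
  have h2 : 0 ≤ u*v := mul_nonneg hu0 hv0
  have h3 : u*v ≤ 2 := by nlinarith [sq_nonneg (u - v)]
  rw [h1, abs_mul]
  have h4 : |u^2 + u*v + v^2 - 1| ≤ 7 := by
    rw [abs_le]; constructor <;> nlinarith
  calc |u - v| * |u^2 + u*v + v^2 - 1| ≤ |u - v| * 7 :=
        mul_le_mul_of_nonneg_left h4 (abs_nonneg _)
    _ = 7 * |u - v| := by ring

lemma f_bound {u : ℝ} (hu0 : 0 ≤ u) (hu2 : u^2 ≤ 2) : |u^3 - u| ≤ 6 := by
  have h1 : u ≤ 3/2 := by nlinarith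
  rw [abs_le]; constructor <;> nlinarith

set_option maxHeartbeats 1000000 in
lemma Lval_aux (E : ℝ → ℝ) {c L : ℝ} (hc : 0 < c)
    (hdiff : ∀ t : ℝ, 0 ≤ t → DifferentiableAt ℝ y t)
    (hdiff' : ∀ t : ℝ, 0 < t → DifferentiableAt ℝ (deriv y) t)
    (hode : ∀ t : ℝ, 0 < t →
      deriv (deriv y) t + (2 / t) * deriv y t + ((y t) ^ 3 - y t) = 0)
    (hEform : ∀ s, E s = (1/2) * (deriv y s)^2 + ((1/4) * (y s)^4 - (1/2)*(y s)^2))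
    (hEd : ∀ t : ℝ, 0 < t → HasDerivAt E (-(2/t) * (deriv y t)^2) t)
    (hanti : AntitoneOn E (Set.Ioi 0))
    (hneg : ∀ t : ℝ, 0 < t → E t < 0)
    (hbdd : ∀ t : ℝ, -(1/4) ≤ E t)
    (hpos : ∀ t : ℝ, 0 ≤ t → 0 < y t)
    (hsq : ∀ t : ℝ, 0 < t → (y t)^2 < 2)
    (hcy : ∀ t : ℝ, 0 < t → c ≤ y t)
    (hL1 : -(1/4) ≤ L) (hL2 : ∀ t : ℝ, 1 ≤ t → L ≤ E t)
    (hL3 : Tendsto E atTop (nhds L)) :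
    L = -(1/4) := by
  by_contra hne
  have hLgt : -(1/4) < L := lt_of_le_of_ne hL1 (Ne.symm hne)
  -- basic continuity facts
  have hy'cont : ∀ t : ℝ, 0 < t → ContinuousAt (deriv y) t := fun t ht =>
    (hdiff' t ht).continuousAt
  have hycont : ∀ t : ℝ, 0 ≤ t → ContinuousAt y t := fun t ht =>
    (hdiff t ht).continuousAt
  -- second derivative formula
  have hddf : ∀ t : ℝ, 0 < t →
      deriv (deriv y) t = -(2/t) * deriv y t - ((y t)^3 - y t) := by
    intro t ht; have := hode t ht; linarith
  -- bound |y'| ≤ 1 on [1, ∞)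
  have hE1neg : E 1 < 0 := hneg 1 one_pos
  have hy'bd : ∀ t : ℝ, 1 ≤ t → |deriv y t| ≤ 1 := by
    intro t ht
    have ht0 : (0:ℝ) < t := lt_of_lt_of_le one_pos ht
    have h1 : E t ≤ E 1 := hanti (Set.mem_Ioi.mpr one_pos) (Set.mem_Ioi.mpr ht0) ht
    have h2 := hEform t
    have h3 : (deriv y t)^2 ≤ 1 := by nlinarith [sq_nonneg ((y t)^2 - 1)]
    calc |deriv y t| = Real.sqrt ((deriv y t)^2) := (Real.sqrt_sq_eq_abs _).symm
      _ ≤ Real.sqrt 1 := Real.sqrt_le_sqrt h3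
      _ = 1 := Real.sqrt_one
  -- bound |y''| ≤ 8 on [1, ∞)
  have hy''bd : ∀ t : ℝ, 1 ≤ t → |deriv (deriv y) t| ≤ 8 := by
    intro t ht
    have ht0 : (0:ℝ) < t := lt_of_lt_of_le one_pos ht
    rw [hddf t ht0]
    have h1 : |(y t)^3 - y t| ≤ 6 := f_bound (hpos t ht0.le).le (hsq t ht0).le
    have h2 : |(2/t) * deriv y t| ≤ 2 := by
      rw [abs_mul]
      have h3 : |2/t| ≤ 2 := by
        rw [abs_of_pos (div_pos two_pos ht0)]
        rw [div_le_iff₀ ht0]; linarith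
      calc |2/t| * |deriv y t| ≤ 2 * 1 :=
          mul_le_mul h3 (hy'bd t ht) (abs_nonneg _) (by norm_num)
        _ = 2 := by norm_num
    calc |-(2/t) * deriv y t - ((y t)^3 - y t)|
        ≤ |-(2/t) * deriv y t| + |(y t)^3 - y t| := abs_sub _ _
      _ ≤ 2 + 6 := by
          refine add_le_add ?_ h1
          rwa [neg_mul, abs_neg]
      _ = 8 := by norm_num
  -- the half-level L'
  set L' : ℝ := (L - 1/4)/2 with hL'def
  have hL'lt : L' < L := by rw [hL'def]; linarith
  have hL'gt : -(1/4) < L' := by rw [hL'def]; linarith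
  -- the compact set S and the minimum m of |f| on it
  set S : Set ℝ := {u : ℝ | u ∈ Set.Icc c (Real.sqrt 2) ∧ L' ≤ (1/4)*u^4 - (1/2)*u^2} with hSdef
  have hVcont : Continuous (fun u : ℝ => (1/4)*u^4 - (1/2)*u^2) :=
    (continuous_const.mul (continuous_pow 4)).sub (continuous_const.mul (continuous_pow 2))
  have hfcont : Continuous (fun u : ℝ => u^3 - u) := (continuous_pow 3).sub continuous_id
  have hSclosed : IsClosed S := by
    have h1 : S = Set.Icc c (Real.sqrt 2) ∩ {u : ℝ | L' ≤ (1/4)*u^4 - (1/2)*u^2} := rfl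
    rw [h1]
    exact isClosed_Icc.inter (isClosed_le continuous_const hVcont)
  have hScompact : IsCompact S := isCompact_Icc.of_isClosed_subset hSclosed (fun u hu => hu.1)
  obtain ⟨m, hmpos, hmS⟩ : ∃ m : ℝ, 0 < m ∧ ∀ u ∈ S, m ≤ |u^3 - u| := by
    by_cases hS : S.Nonempty
    · obtain ⟨u₀, hu₀S, hmin⟩ := hScompact.exists_isMinOn hS
        (continuous_abs.comp hfcont).continuousOn
      refine ⟨|u₀^3 - u₀|, ?_, fun u hu => hmin hu⟩
      rcases eq_or_lt_of_le (abs_nonneg (u₀^3 - u₀)) with h | h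
      · exfalso
        have h0 : u₀^3 - u₀ = 0 := abs_eq_zero.mp h.symm
        have hc1 : c ≤ u₀ := hu₀S.1.1
        have hu₀pos : 0 < u₀ := lt_of_lt_of_le hc hc1
        have h5 : u₀ * (u₀^2 - 1) = 0 := by linear_combination h0
        have hu₀1 : u₀ = 1 := by
          rcases mul_eq_zero.mp h5 with h6 | h6
          · exact absurd h6 hu₀pos.ne'
          · nlinarith
        have := hu₀S.2
        rw [hu₀1] at this
        norm_num at this
        linarith
      · exact h
    · exact ⟨1, one_pos, fun u hu => absurd ⟨u, hu⟩ hS⟩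
  -- choice of η
  set η : ℝ := min (Real.sqrt (2*(L - L'))) (m/24) with hηdef
  have hηpos : 0 < η := lt_min (Real.sqrt_pos.mpr (by linarith)) (by linarith)
  have hηsq : η^2 ≤ 2*(L - L') := by
    have h1 : η ≤ Real.sqrt (2*(L - L')) := min_le_left _ _
    nlinarith [Real.sq_sqrt (by linarith : (0:ℝ) ≤ 2*(L - L')), Real.sqrt_nonneg (2*(L-L')), hηpos.le]
  have hηm : η ≤ m/24 := min_le_right _ _
  have hηhalf : η ≤ 1/2 := by
    have h1 : η ≤ Real.sqrt (2*(L - L')) := min_le_left _ _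
    have h2 : 2*(L - L') ≤ 1/4 := by
      have := hneg 1 one_pos
      have := hL2 1 le_rfl
      rw [hL'def]; linarith
    calc η ≤ Real.sqrt (2*(L-L')) := h1
      _ ≤ Real.sqrt (1/4) := Real.sqrt_le_sqrt h2
      _ = 1/2 := by
          rw [show (1/4 : ℝ) = (1/2)^2 by norm_num, Real.sqrt_sq (by norm_num)]
  -- choice of T
  set T : ℝ := max 2 (16*η/m) with hTdef
  have hT2 : 2 ≤ T := le_max_left _ _
  have hT1 : 1 ≤ T := by linarith
  have hT0 : 0 < T := by linarith
  have hTη : 16*η/m ≤ T := le_max_right _ _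
  have hTηm : (2/T)*η ≤ m/8 := by
    rw [div_mul_eq_mul_div, div_le_div_iff₀ hT0 (by norm_num : (0:ℝ) < 8)]
    have h1 : 16*η ≤ T*m := by
      rw [div_le_iff₀ hmpos] at hTη
      linarith
    linarith
  -- Claim A
  have claimA : ∀ t : ℝ, T ≤ t → ∃ s ∈ Set.Icc t (t + 1/2), η ≤ |deriv y s| := by
    intro t ht
    by_contra hcon
    push_neg at hcon
    have ht1 : (1:ℝ) ≤ t := le_trans hT1 ht
    have ht0 : (0:ℝ) < t := lt_of_lt_of_le one_pos ht1
    -- (b): y t ∈ S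
    have hytS : y t ∈ S := by
      constructor
      · constructor
        · exact hcy t ht0
        · have h1 := hsq t ht0
          have h2 := (hpos t ht0.le).le
          calc y t = Real.sqrt ((y t)^2) := (Real.sqrt_sq h2).symm
            _ ≤ Real.sqrt 2 := Real.sqrt_le_sqrt h1.le
      · have h1 : L ≤ E t := hL2 t ht1
        have h2 := hEform t
        have h3 : |deriv y t| < η := hcon t ⟨le_rfl, by linarith⟩
        have h4 : (deriv y t)^2 ≤ η^2 := by nlinarith [abs_nonneg (deriv y t), sq_abs (deriv y t)]
        have : L' ≤ L - η^2/2 := by linarith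
        nlinarith
    have hfm : m ≤ |(y t)^3 - y t| := hmS _ hytS
    -- (a): |y s - y t| ≤ η/2 on the interval
    have hya : ∀ s ∈ Set.Icc t (t + 1/2), |y s - y t| ≤ η/2 := by
      intro s hs
      have h1 : ∀ x ∈ Set.Icc t (t + 1/2), DifferentiableAt ℝ y x :=
        fun x hx => hdiff x (le_trans ht0.le hx.1)
      have h2 : ∀ x ∈ Set.Icc t (t + 1/2), ‖deriv y x‖ ≤ η :=
        fun x hx => by rw [Real.norm_eq_abs]; exact (hcon x hx).le
      have h3 := Convex.norm_image_sub_le_of_norm_deriv_le h1 h2 (convex_Icc _ _)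
        (Set.left_mem_Icc.mpr (by linarith)) hs
      rw [Real.norm_eq_abs] at h3
      calc |y s - y t| ≤ η * ‖s - t‖ := h3
        _ ≤ η * (1/2) := by
            refine mul_le_mul_of_nonneg_left ?_ hηpos.le
            rw [Real.norm_eq_abs, abs_of_nonneg (by linarith [hs.1])]
            linarith [hs.2]
        _ = η/2 := by ring
    -- (c): |f(y s) - f(y t)| ≤ m/2
    have hfc : ∀ s ∈ Set.Icc t (t + 1/2), |((y s)^3 - y s) - ((y t)^3 - y t)| ≤ m/2 := by
      intro s hs
      have hs0 : (0:ℝ) < s := lt_of_lt_of_le ht0 hs.1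
      have h1 := lip_aux (hpos s hs0.le).le (hsq s hs0).le (hpos t ht0.le).le (hsq t ht0).le
      calc |((y s)^3 - y s) - ((y t)^3 - y t)| ≤ 7 * |y s - y t| := h1
        _ ≤ 7 * (η/2) := by linarith [hya s hs]
        _ ≤ m/2 := by linarith
    -- integrability of y'' on [t, t+1/2]
    have hcontdd : ContinuousOn (deriv (deriv y)) (Set.Icc t (t + 1/2)) := by
      apply ContinuousOn.congr (f := fun s => -(2/s) * deriv y s - ((y s)^3 - y s))
      · apply ContinuousOn.sub
        · apply ContinuousOn.mul
          · apply ContinuousOn.neg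
            apply ContinuousOn.div continuousOn_const continuousOn_id
            intro x hx
            exact ne_of_gt (lt_of_lt_of_le ht0 hx.1)
          · exact fun x hx => ((hdiff' x (lt_of_lt_of_le ht0 hx.1)).continuousAt).continuousWithinAt
        · apply ContinuousOn.sub
          · exact ContinuousOn.pow (fun x hx => ((hdiff x (le_trans ht0.le hx.1)).continuousAt).continuousWithinAt) 3
          · exact fun x hx => ((hdiff x (le_trans ht0.le hx.1)).continuousAt).continuousWithinAt
      · intro x hx
        exact hddf x (lt_of_lt_of_le ht0 hx.1)
    have hint : IntervalIntegrable (deriv (deriv y)) MeasureTheory.volume t (t + 1/2) := by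
      apply ContinuousOn.intervalIntegrable
      rwa [Set.uIcc_of_le (by linarith : t ≤ t + 1/2)]
    have hftc : deriv y (t + 1/2) - deriv y t =
        ∫ s in t..(t+1/2), deriv (deriv y) s := by
      symm
      apply intervalIntegral.integral_eq_sub_of_hasDerivAt
      · intro x hx
        rw [Set.uIcc_of_le (by linarith : t ≤ t + 1/2)] at hx
        exact (hdiff' x (lt_of_lt_of_le ht0 hx.1)).hasDerivAt
      · exact hint
    -- bound on damping term
    have hdamp : ∀ s ∈ Set.Icc t (t + 1/2), |(2/s) * deriv y s| ≤ m/8 := by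
      intro s hs
      have hs0 : (0:ℝ) < s := lt_of_lt_of_le ht0 hs.1
      have hsT : T ≤ s := le_trans ht hs.1
      rw [abs_mul, abs_of_pos (div_pos two_pos hs0)]
      calc (2/s) * |deriv y s| ≤ (2/T) * η := by
            apply mul_le_mul
            · exact div_le_div_of_nonneg_left (by norm_num) hT0 hsT
            · exact (hcon s hs).le
            · exact abs_nonneg _
            · positivity
        _ ≤ m/8 := hTηm
    have habs2 : |deriv y (t + 1/2) - deriv y t| ≤ 2 * η := by
      have h1 := (hcon t ⟨le_rfl, by linarith⟩).le
      have h2 := (hcon (t + 1/2) ⟨by linarith, le_rfl⟩).le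
      calc |deriv y (t + 1/2) - deriv y t| ≤ |deriv y (t + 1/2)| + |deriv y t| := abs_sub _ _
        _ ≤ 2 * η := by linarith
    -- case analysis on the sign of f(y t)
    rcases le_or_gt m ((y t)^3 - y t) with hf0 | hf0'
    · -- positive case: y'' ≤ -(3/8) m on the interval
      have hptwise : ∀ s ∈ Set.Icc t (t + 1/2), deriv (deriv y) s ≤ -(3/8) * m := by
        intro s hs
        have hs0 : (0:ℝ) < s := lt_of_lt_of_le ht0 hs.1
        rw [hddf s hs0]
        have h1 := hdamp s hs
        have h2 := hfc s hs
        have h3 : m/2 ≤ (y s)^3 - y s := by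
          rcases abs_le.mp h2 with ⟨h4, _⟩
          linarith
        have h5 : -(2/s) * deriv y s ≤ m/8 := by
          rcases abs_le.mp h1 with ⟨h6, h7⟩
          linarith [neg_abs_le ((2/s) * deriv y s)]
        linarith
      have hib : (∫ s in t..(t+1/2), deriv (deriv y) s) ≤ -(3/16) * m := by
        have h1 := intervalIntegral.integral_mono_on (by linarith : t ≤ t + 1/2) hint
          (_root_.intervalIntegrable_const (c := -(3/8)*m)) hptwise
        rw [intervalIntegral.integral_const, smul_eq_mul] at h1
        calc (∫ s in t..(t+1/2), deriv (deriv y) s) ≤ (t + 1/2 - t) * (-(3/8)*m) := h1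
          _ = -(3/16) * m := by ring
      rw [← hftc] at hib
      have := abs_le.mp habs2
      linarith [this.1]
    · -- negative case: f(y t) ≤ -m, y'' ≥ (3/8) m
      have hf0 : (y t)^3 - y t ≤ -m := by
        rcases abs_cases ((y t)^3 - y t) with ⟨h, _⟩ | ⟨h, _⟩
        · rw [h] at hfm; linarith
        · rw [h] at hfm; linarith
      have hptwise : ∀ s ∈ Set.Icc t (t + 1/2), (3/8) * m ≤ deriv (deriv y) s := by
        intro s hs
        have hs0 : (0:ℝ) < s := lt_of_lt_of_le ht0 hs.1
        rw [hddf s hs0]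
        have h1 := hdamp s hs
        have h2 := hfc s hs
        have h3 : (y s)^3 - y s ≤ -(m/2) := by
          rcases abs_le.mp h2 with ⟨_, h4⟩
          linarith
        have h5 : -(m/8) ≤ -(2/s) * deriv y s := by
          rcases abs_le.mp h1 with ⟨h6, h7⟩
          linarith [le_abs_self ((2/s) * deriv y s)]
        linarith
      have hib : (3/16) * m ≤ ∫ s in t..(t+1/2), deriv (deriv y) s := by
        have h1 := intervalIntegral.integral_mono_on (by linarith : t ≤ t + 1/2)
          (_root_.intervalIntegrable_const (c := (3/8)*m)) hint hptwise
        rw [intervalIntegral.integral_const, smul_eq_mul] at h1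
        calc (3/16) * m = (t + 1/2 - t) * ((3/8)*m) := by ring
          _ ≤ _ := h1
      rw [← hftc] at hib
      have := abs_le.mp habs2
      linarith [this.2]
  -- general integrability of (deriv y)^2 on intervals in [1, ∞)
  have hsqint : ∀ a b' : ℝ, 1 ≤ a → a ≤ b' →
      IntervalIntegrable (fun s => (deriv y s)^2) MeasureTheory.volume a b' := by
    intro a b' ha hab
    apply ContinuousOn.intervalIntegrable
    rw [Set.uIcc_of_le hab]
    exact ContinuousOn.pow (fun x hx =>
      ((hdiff' x (lt_of_lt_of_le one_pos (le_trans ha hx.1))).continuousAt).continuousWithinAt) 2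
  -- Claim B : integral of y'^2 over [t, t+1] is at least ρ
  set ρ : ℝ := (η/2)^2 * (η/16) with hρdef
  have hρpos : 0 < ρ := by positivity
  have claimB : ∀ t : ℝ, T ≤ t → ρ ≤ ∫ s in t..(t+1), (deriv y s)^2 := by
    intro t ht
    have ht1 : (1:ℝ) ≤ t := le_trans hT1 ht
    have ht0 : (0:ℝ) < t := lt_of_lt_of_le one_pos ht1
    obtain ⟨s₀, hs₀mem, hs₀⟩ := claimA t ht
    set d : ℝ := η/16 with hddef
    have hdpos : 0 < d := by positivity
    have hdhalf : d ≤ 1/2 := by rw [hddef]; linarith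
    have hs₀1 : (1:ℝ) ≤ s₀ := le_trans ht1 hs₀mem.1
    -- y' stays ≥ η/2 in absolute value on [s₀, s₀+d]
    have hstay : ∀ u ∈ Set.Icc s₀ (s₀ + d), (η/2)^2 ≤ (deriv y u)^2 := by
      intro u hu
      have h1 : ∀ x ∈ Set.Icc s₀ (s₀ + d), DifferentiableAt ℝ (deriv y) x :=
        fun x hx => hdiff' x (lt_of_lt_of_le one_pos (le_trans hs₀1 hx.1))
      have h2 : ∀ x ∈ Set.Icc s₀ (s₀ + d), ‖deriv (deriv y) x‖ ≤ 8 :=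
        fun x hx => by rw [Real.norm_eq_abs]; exact hy''bd x (le_trans hs₀1 hx.1)
      have h3 := Convex.norm_image_sub_le_of_norm_deriv_le h1 h2 (convex_Icc _ _)
        (Set.left_mem_Icc.mpr (by linarith)) hu
      rw [Real.norm_eq_abs, Real.norm_eq_abs] at h3
      have h4 : |deriv y u - deriv y s₀| ≤ 8 * d := by
        calc |deriv y u - deriv y s₀| ≤ 8 * |u - s₀| := h3
          _ ≤ 8 * d := by
              refine mul_le_mul_of_nonneg_left ?_ (by norm_num)
              rw [abs_of_nonneg (by linarith [hu.1])]
              linarith [hu.2]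
      have h5 : η/2 ≤ |deriv y u| := by
        have h6 : 8 * d = η/2 := by rw [hddef]; ring
        rw [h6] at h4
        have h7 := abs_sub_abs_le_abs_sub (deriv y s₀) (deriv y u)
        rw [abs_sub_comm (deriv y s₀) (deriv y u)] at h7
        linarith
      calc (η/2)^2 ≤ |deriv y u|^2 := by
            apply pow_le_pow_left₀ (by positivity) h5
        _ = (deriv y u)^2 := sq_abs _
    -- split the integral
    have hd1 : s₀ + d ≤ t + 1 := by linarith [hs₀mem.2]
    have e1 := intervalIntegral.integral_add_adjacent_intervals
      (hsqint t s₀ ht1 hs₀mem.1) (hsqint s₀ (t+1) hs₀1 (by linarith [hs₀mem.1, hs₀mem.2]))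
    have e2 := intervalIntegral.integral_add_adjacent_intervals
      (hsqint s₀ (s₀+d) hs₀1 (by linarith)) (hsqint (s₀+d) (t+1) (by linarith) hd1)
    have b1 : (0:ℝ) ≤ ∫ s in t..s₀, (deriv y s)^2 :=
      intervalIntegral.integral_nonneg hs₀mem.1 (fun u _ => sq_nonneg _)
    have b3 : (0:ℝ) ≤ ∫ s in (s₀+d)..(t+1), (deriv y s)^2 :=
      intervalIntegral.integral_nonneg hd1 (fun u _ => sq_nonneg _)
    have b2 : (η/2)^2 * d ≤ ∫ s in s₀..(s₀+d), (deriv y s)^2 := by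
      have h1 := intervalIntegral.integral_mono_on (by linarith : s₀ ≤ s₀ + d)
        (_root_.intervalIntegrable_const (c := (η/2)^2))
        (hsqint s₀ (s₀+d) hs₀1 (by linarith)) hstay
      rw [intervalIntegral.integral_const, smul_eq_mul] at h1
      calc (η/2)^2 * d = (s₀ + d - s₀) * (η/2)^2 := by ring
        _ ≤ _ := h1
    have : ρ ≤ (η/2)^2 * d := by rw [hρdef, hddef]
    linarith [e1, e2]
  -- Claim C : energy drop over [t, t+1]
  have claimC : ∀ t : ℝ, T ≤ t → E (t+1) ≤ E t - (2/(t+1)) * ρ := by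
    intro t ht
    have ht1 : (1:ℝ) ≤ t := le_trans hT1 ht
    have ht0 : (0:ℝ) < t := lt_of_lt_of_le one_pos ht1
    have hintE : IntervalIntegrable (fun s => -(2/s) * (deriv y s)^2)
        MeasureTheory.volume t (t+1) := by
      apply ContinuousOn.intervalIntegrable
      rw [Set.uIcc_of_le (by linarith : t ≤ t + 1)]
      apply ContinuousOn.mul
      · apply ContinuousOn.neg
        apply ContinuousOn.div continuousOn_const continuousOn_id
        intro x hx
        exact ne_of_gt (lt_of_lt_of_le ht0 hx.1)
      · exact ContinuousOn.pow (fun x hx =>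
          ((hdiff' x (lt_of_lt_of_le ht0 hx.1)).continuousAt).continuousWithinAt) 2
    have hftcE : E (t+1) - E t = ∫ s in t..(t+1), -(2/s) * (deriv y s)^2 := by
      symm
      apply intervalIntegral.integral_eq_sub_of_hasDerivAt
      · intro x hx
        rw [Set.uIcc_of_le (by linarith : t ≤ t + 1)] at hx
        exact hEd x (lt_of_lt_of_le ht0 hx.1)
      · exact hintE
    have hmono : (∫ s in t..(t+1), -(2/s) * (deriv y s)^2)
        ≤ ∫ s in t..(t+1), -(2/(t+1)) * (deriv y s)^2 := by
      apply intervalIntegral.integral_mono_on (by linarith : t ≤ t + 1) hintE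
      · exact (hsqint t (t+1) ht1 (by linarith)).const_mul _
      · intro x hx
        have hx0 : (0:ℝ) < x := lt_of_lt_of_le ht0 hx.1
        have h1 : 2/(t+1) ≤ 2/x := div_le_div_of_nonneg_left (by norm_num) hx0 (by linarith [hx.2])
        nlinarith [sq_nonneg (deriv y x)]
    have heq : (∫ s in t..(t+1), -(2/(t+1)) * (deriv y s)^2)
        = -(2/(t+1)) * ∫ s in t..(t+1), (deriv y s)^2 :=
      intervalIntegral.integral_const_mul _ _
    have hfin : -(2/(t+1)) * (∫ s in t..(t+1), (deriv y s)^2) ≤ -(2/(t+1)) * ρ := by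
      apply mul_le_mul_of_nonpos_left (claimB t ht)
      have : (0:ℝ) < 2/(t+1) := div_pos two_pos (by linarith)
      linarith
    rw [heq] at hmono
    linarith [hftcE, hmono, hfin]
  -- Claim D : iterate to contradiction
  have main : ∀ n : ℕ, E (T + n) ≤ E T - (2*ρ/(T+1)) * ∑ k ∈ Finset.range n, 1/((k:ℝ)+1) := by
    intro n
    induction n with
    | zero => simp
    | succ n ih =>
      have h1 := claimC (T + n) (le_add_of_nonneg_right n.cast_nonneg)
      have h2 : (T + (↑(n+1):ℝ)) = (T + n) + 1 := by push_cast; ring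
      rw [h2, Finset.sum_range_succ]
      have h3 : (2*ρ/(T+1)) * (1/((n:ℝ)+1)) ≤ (2/((T+n)+1)) * ρ := by
        have e1 : (2*ρ/(T+1)) * (1/((n:ℝ)+1)) = 2*ρ/((T+1)*((n:ℝ)+1)) := by
          field_simp
        have e2 : (2/((T+n)+1)) * ρ = 2*ρ/(T+(n:ℝ)+1) := by ring
        rw [e1, e2]
        apply div_le_div_of_nonneg_left (by positivity) (by positivity)
        have hn0 : (0:ℝ) ≤ (n:ℝ) := n.cast_nonneg
        nlinarith
      have h4 : E ((T+n)+1) ≤ E (T+n) - (2*ρ/(T+1)) * (1/((n:ℝ)+1)) := by linarith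
      linarith [ih]
  obtain ⟨n, hn⟩ := (tendsto_sum_range_one_div_nat_succ_atTop.eventually_gt_atTop
    ((E T + 1/4)*(T+1)/(2*ρ))).exists
  have h5 := main n
  have h6 : (2*ρ/(T+1)) * ((E T + 1/4)*(T+1)/(2*ρ)) = E T + 1/4 := by
    field_simp
  have h7 : (0:ℝ) < 2*ρ/(T+1) := by positivity
  have h8 : E T + 1/4 < (2*ρ/(T+1)) * ∑ k ∈ Finset.range n, 1/((k:ℝ)+1) := by
    calc E T + 1/4 = (2*ρ/(T+1)) * ((E T + 1/4)*(T+1)/(2*ρ)) := h6.symm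
      _ < _ := by exact mul_lt_mul_of_pos_left hn h7
  have h9 := hbdd (T + n)
  linarith
lemma endgame_aux (E : ℝ → ℝ)
    (hEform : ∀ s, E s = (1/2) * (deriv y s)^2 + ((1/4) * (y s)^4 - (1/2)*(y s)^2))
    (hpos : ∀ t : ℝ, 0 ≤ t → 0 < y t)
    (hlim : Tendsto E atTop (nhds (-(1/4)))) :
    Tendsto (fun t => (y t, deriv y t)) atTop (nhds (1, 0)) := by
  have hg : Tendsto (fun t => E t + 1/4) atTop (nhds 0) := by
    have := hlim.add_const (1/4)
    norm_num at this
    exact this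
  have hid : ∀ t, E t + 1/4 = (1/2) * (deriv y t)^2 + (1/4)*((y t)^2 - 1)^2 := by
    intro t; rw [hEform t]; ring
  -- deriv y tends to 0
  have h1 : Tendsto (fun t => (deriv y t)^2) atTop (nhds 0) := by
    have hub : ∀ t, (deriv y t)^2 ≤ 2 * (E t + 1/4) := by
      intro t; rw [hid t]; nlinarith [sq_nonneg ((y t)^2 - 1)]
    have h2 : Tendsto (fun t => 2 * (E t + 1/4)) atTop (nhds 0) := by
      have := hg.const_mul 2
      norm_num at this
      exact this
    exact squeeze_zero (fun t => sq_nonneg _) hub h2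
  have habs1 : Tendsto (fun t => |deriv y t|) atTop (nhds 0) := by
    have h3 := (Real.continuous_sqrt.tendsto 0).comp h1
    rw [Real.sqrt_zero] at h3
    refine h3.congr fun t => ?_
    exact Real.sqrt_sq_eq_abs _
  have hyd : Tendsto (fun t => deriv y t) atTop (nhds 0) := by
    have hn : Tendsto (fun t => -|deriv y t|) atTop (nhds 0) := by
      have := habs1.neg; rwa [neg_zero] at this
    exact tendsto_of_tendsto_of_tendsto_of_le_of_le hn habs1
      (fun t => neg_abs_le _) (fun t => le_abs_self _)
  -- y tends to 1
  have h4 : Tendsto (fun t => ((y t)^2 - 1)^2) atTop (nhds 0) := by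
    have hub : ∀ t, ((y t)^2 - 1)^2 ≤ 4 * (E t + 1/4) := by
      intro t; rw [hid t]; nlinarith [sq_nonneg (deriv y t)]
    have h5 : Tendsto (fun t => 4 * (E t + 1/4)) atTop (nhds 0) := by
      have := hg.const_mul 4
      norm_num at this
      exact this
    exact squeeze_zero (fun t => sq_nonneg _) hub h5
  have habs2 : Tendsto (fun t => |(y t)^2 - 1|) atTop (nhds 0) := by
    have h6 := (Real.continuous_sqrt.tendsto 0).comp h4
    rw [Real.sqrt_zero] at h6
    refine h6.congr fun t => ?_
    exact Real.sqrt_sq_eq_abs _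
  have habs3 : Tendsto (fun t => |y t - 1|) atTop (nhds 0) := by
    apply squeeze_zero' (Eventually.of_forall (fun t => abs_nonneg _))
    · filter_upwards [eventually_ge_atTop (0:ℝ)] with t ht
      have hy0 : 0 < y t := hpos t ht
      have he : |(y t)^2 - 1| = |y t - 1| * |y t + 1| := by
        rw [← abs_mul]; ring_nf
      have h7 : (1:ℝ) ≤ |y t + 1| := by
        rw [abs_of_pos (by linarith)]; linarith
      calc |y t - 1| = |y t - 1| * 1 := (mul_one _).symm
        _ ≤ |y t - 1| * |y t + 1| := mul_le_mul_of_nonneg_left h7 (abs_nonneg _)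
        _ = |(y t)^2 - 1| := he.symm
    · exact habs2
  have hy1 : Tendsto y atTop (nhds 1) := by
    have h8 : Tendsto (fun t => y t - 1) atTop (nhds 0) := by
      have hn : Tendsto (fun t => -|y t - 1|) atTop (nhds 0) := by
        have := habs3.neg; rwa [neg_zero] at this
      exact tendsto_of_tendsto_of_tendsto_of_le_of_le hn habs3
        (fun t => neg_abs_le _) (fun t => le_abs_self _)
    have := h8.add_const 1
    norm_num at this
    exact this.congr fun t => by ring
  exact hy1.prodMk_nhds hyd
end Aux

theorem small_b_falls_right (b : ℝ) (hb0 : 0 < b) (hb : b ≤ Real.sqrt 2)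
    (y : ℝ → ℝ) (hy : IsSolution b y)
    (hnz : ∃ t : ℝ, 0 ≤ t ∧ y t ≠ 0) :
    (∀ t : ℝ, 0 < t → energy y t < 0) ∧
    Filter.Tendsto (fun t => (y t, deriv y t)) Filter.atTop (nhds (1, 0)) ∧
    (∃ c : ℝ, 0 < c ∧ ∀ t : ℝ, 0 < t → c ≤ y t) ∧
    ∀ t : ℝ, 0 ≤ t → y t ≠ 0 := by
  obtain ⟨hy0, hd0, hdiff, hdiff', hode⟩ := hy
  have hy' : IsSolution b y := ⟨hy0, hd0, hdiff, hdiff', hode⟩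
  have hEform : ∀ s, energy y s =
      (1/2) * (deriv y s)^2 + ((1/4) * (y s)^4 - (1/2)*(y s)^2) := by
    intro s; rw [energy]; ring
  have hanti : AntitoneOn (energy y) (Set.Ioi 0) := energy_antitoneOn hy'
  have hEd : ∀ t : ℝ, 0 < t → HasDerivAt (energy y) (-(2/t) * (deriv y t)^2) t :=
    fun t ht => energy_hasDerivAt hy' ht
  have hle : ∀ t : ℝ, 0 < t → energy y t ≤ (1/4) * b^4 - (1/2) * b^2 :=
    fun t ht => energy_le_aux (energy y) hy0 (hdiff 0 le_rfl) hd0 hdiff hanti hEform ht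
  have hneg : ∀ t : ℝ, 0 < t → energy y t < 0 :=
    fun t ht => energy_neg_aux (energy y) hb0 hb hy0 hdiff hode hanti
      (fun s hs => (hEd s hs).deriv) hle ht
  obtain ⟨hpos, hsq⟩ := pos_aux (energy y) hb0 hy0 hdiff hEform hneg
  obtain ⟨c, hcpos, hcy⟩ := lower_bound_aux (energy y) hdiff hEform hanti hneg hpos
  have hbdd : ∀ t : ℝ, -(1/4) ≤ energy y t := bdd_below_aux (energy y) hEform
  obtain ⟨L, hL1, hL2, hL3⟩ := limit_aux (energy y) hanti hbdd
  have hLval : L = -(1/4) :=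
    Lval_aux (energy y) hcpos hdiff hdiff' hode hEform hEd hanti hneg hbdd hpos hsq hcy
      hL1 hL2 hL3
  rw [hLval] at hL3
  have htend := endgame_aux (energy y) hEform hpos hL3
  exact ⟨hneg, htend, ⟨c, hcpos, hcy⟩, fun t ht => (hpos t ht).ne'⟩
end
end

section
/- For every b ∈ ℝ, the total dissipation of the solution y_b is finite: ∫₀^∞ ẏ_b(t)²/t dt < ∞; in fact 2·∫₀^∞ ẏ_b(t)²/t dt ≤ V(b) + 1/4, where V(b) = b⁴/4 − b²/2. -/
noncomputable section

open Set Filter Topology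

open MeasureTheory in
theorem dissipation_finite (b : ℝ) (y : ℝ → ℝ) (hy : IsSolution b y) :
    IntegrableOn (fun t => (deriv y t) ^ 2 / t) (Set.Ioi 0) ∧
    2 * ∫ t in Set.Ioi (0 : ℝ), (deriv y t) ^ 2 / t ≤
      (b ^ 4 / 4 - b ^ 2 / 2) + 1 / 4 := by
  obtain ⟨hb0, hd0, hdy, hdd, hode⟩ := hy
  -- derivative of the energy
  have hED : ∀ t : ℝ, 0 < t →
      HasDerivAt (energy y) (-(2 / t) * (deriv y t) ^ 2) t := by
    intro t ht
    have h1 : HasDerivAt y (deriv y t) t := (hdy t ht.le).hasDerivAt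
    have h2 : HasDerivAt (deriv y) (deriv (deriv y) t) t := (hdd t ht).hasDerivAt
    have h : HasDerivAt (fun s => (1 / 2) * (deriv y s) ^ 2 + (1 / 4) * (y s) ^ 4
        - (1 / 2) * (y s) ^ 2)
        (((1:ℝ)/2) * ((2:ℕ) * (deriv y t) ^ (2-1) * deriv (deriv y) t)
          + ((1:ℝ)/4) * ((4:ℕ) * (y t) ^ (4-1) * deriv y t)
          - ((1:ℝ)/2) * ((2:ℕ) * (y t) ^ (2-1) * deriv y t)) t :=
      (((h2.pow 2).const_mul ((1:ℝ)/2)).add ((h1.pow 4).const_mul ((1:ℝ)/4))).sub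
        ((h1.pow 2).const_mul ((1:ℝ)/2))
    have heq : ((1:ℝ)/2) * ((2:ℕ) * (deriv y t) ^ (2-1) * deriv (deriv y) t)
          + ((1:ℝ)/4) * ((4:ℕ) * (y t) ^ (4-1) * deriv y t)
          - ((1:ℝ)/2) * ((2:ℕ) * (y t) ^ (2-1) * deriv y t)
        = -(2 / t) * (deriv y t) ^ 2 := by
      have h3 := hode t ht
      push_cast
      linear_combination (deriv y t) * h3
    rw [heq] at h
    exact h
  -- E is antitone on (0, ∞)
  have hEanti : AntitoneOn (energy y) (Ioi 0) := by
    apply antitoneOn_of_deriv_nonpos (convex_Ioi 0)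
    · intro x hx
      exact (hED x hx).differentiableAt.continuousAt.continuousWithinAt
    · rw [interior_Ioi]
      intro x hx
      exact (hED x hx).differentiableAt.differentiableWithinAt
    · rw [interior_Ioi]
      intro x hx
      rw [(hED x hx).deriv]
      have : (0:ℝ) ≤ (2 / x) * (deriv y x) ^ 2 :=
        mul_nonneg (div_nonneg (by norm_num) (le_of_lt hx)) (sq_nonneg _)
      linarith
  -- lower bound for the energy
  have hEge : ∀ t : ℝ, -(1/4) ≤ energy y t := by
    intro t
    unfold energy
    nlinarith [sq_nonneg (deriv y t), sq_nonneg ((y t) ^ 2 - 1)]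
  -- sequence along which deriv y tends to 0 (MVT)
  have hslope : Tendsto (fun u => (y u - b) / u) (𝓝[>] (0:ℝ)) (𝓝 0) := by
    have h := (hdy 0 le_rfl).hasDerivAt
    rw [hasDerivAt_iff_tendsto_slope, hd0] at h
    have h' : Tendsto (slope y 0) (𝓝[>] (0:ℝ)) (𝓝 0) :=
      h.mono_left (nhdsWithin_mono 0 (fun x hx => ne_of_gt hx))
    refine h'.congr' ?_
    filter_upwards [self_mem_nhdsWithin] with u hu
    simp [slope_def_field, hb0]
  have hc : ∀ u : ℝ, 0 < u → ∃ c ∈ Ioo 0 u, deriv y c = (y u - y 0) / (u - 0) := by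
    intro u hu
    refine exists_deriv_eq_slope y hu ?_ ?_
    · intro x hx
      exact (hdy x hx.1).continuousAt.continuousWithinAt
    · intro x hx
      exact (hdy x hx.1.le).differentiableWithinAt
  choose! c hmem heq2 using hc
  have hctend : Tendsto c (𝓝[>] (0:ℝ)) (𝓝[>] (0:ℝ)) := by
    rw [tendsto_nhdsWithin_iff]
    constructor
    · refine tendsto_of_tendsto_of_tendsto_of_le_of_le' tendsto_const_nhds
        (tendsto_id.mono_left nhdsWithin_le_nhds) ?_ ?_
      · filter_upwards [self_mem_nhdsWithin] with u hu
        exact (hmem u hu).1.le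
      · filter_upwards [self_mem_nhdsWithin] with u hu
        exact (hmem u hu).2.le
    · filter_upwards [self_mem_nhdsWithin] with u hu
      exact (hmem u hu).1
  have hctend' : Tendsto c (𝓝[>] (0:ℝ)) (𝓝 0) := hctend.mono_right nhdsWithin_le_nhds
  have hyc : Tendsto (fun u => y (c u)) (𝓝[>] (0:ℝ)) (𝓝 b) := by
    have := ((hdy 0 le_rfl).continuousAt.tendsto).comp hctend'
    rwa [hb0] at this
  have hdc : Tendsto (fun u => deriv y (c u)) (𝓝[>] (0:ℝ)) (𝓝 0) := by
    refine hslope.congr' ?_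
    filter_upwards [self_mem_nhdsWithin] with u hu
    rw [heq2 u hu, hb0, sub_zero]
  have hEc : Tendsto (fun u => energy y (c u)) (𝓝[>] (0:ℝ))
      (𝓝 (b ^ 4 / 4 - b ^ 2 / 2)) := by
    have h : Tendsto (fun u => (1/2) * (deriv y (c u)) ^ 2 + (1/4) * (y (c u)) ^ 4
        - (1/2) * (y (c u)) ^ 2) (𝓝[>] (0:ℝ))
        (𝓝 ((1/2) * (0:ℝ) ^ 2 + (1/4) * b ^ 4 - (1/2) * b ^ 2)) :=
      (((hdc.pow 2).const_mul _).add ((hyc.pow 4).const_mul _)).sub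
        ((hyc.pow 2).const_mul _)
    have : ((1/2) * (0:ℝ) ^ 2 + (1/4) * b ^ 4 - (1/2) * b ^ 2)
        = b ^ 4 / 4 - b ^ 2 / 2 := by ring
    rw [this] at h
    exact h
  have hEle : ∀ t : ℝ, 0 < t → energy y t ≤ b ^ 4 / 4 - b ^ 2 / 2 := by
    intro t ht
    refine ge_of_tendsto hEc ?_
    filter_upwards [Ioo_mem_nhdsGT_of_mem (by exact ⟨le_rfl, ht⟩ : (0:ℝ) ∈ Ico 0 t)]
      with u hu
    exact hEanti (hmem u hu.1).1 ht ((hmem u hu.1).2.le.trans hu.2.le)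
  -- G = -E, monotone, bounded
  set G : ℝ → ℝ := fun t => -energy y t with hGdef
  have hGmono : MonotoneOn G (Ioi 0) := fun a ha b' hb' hab =>
    neg_le_neg (hEanti ha hb' hab)
  have hGle : ∀ t : ℝ, G t ≤ 1/4 := fun t => by
    have := hEge t; simp only [hGdef]; linarith
  have hGge : ∀ t : ℝ, 0 < t → -(b ^ 4 / 4 - b ^ 2 / 2) ≤ G t := fun t ht =>
    neg_le_neg (hEle t ht)
  -- limit at infinity
  set G1 : ℝ → ℝ := fun t => G (max t 1) with hG1def
  have hmax : ∀ t : ℝ, (0:ℝ) < max t 1 := fun t =>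
    lt_of_lt_of_le one_pos (le_max_right t 1)
  have hG1mono : Monotone G1 := fun a b' hab =>
    hGmono (hmax a) (hmax b') (max_le_max hab le_rfl)
  have hG1bdd : BddAbove (Set.range G1) := ⟨1/4, by rintro _ ⟨x, rfl⟩; exact hGle _⟩
  have hG1t : Tendsto G1 atTop (𝓝 (⨆ x, G1 x)) := tendsto_atTop_ciSup hG1mono hG1bdd
  have hGt : Tendsto G atTop (𝓝 (⨆ x, G1 x)) := by
    refine hG1t.congr' ?_
    filter_upwards [eventually_ge_atTop (1:ℝ)] with x hx
    simp [hG1def, max_eq_left hx]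
  have hlle : (⨆ x, G1 x) ≤ 1/4 := ciSup_le fun x => hGle _
  -- limit at 0
  have hGbdd : BddBelow (G '' Ioi (0:ℝ)) :=
    ⟨-(b ^ 4 / 4 - b ^ 2 / 2), by rintro _ ⟨x, hx, rfl⟩; exact hGge x hx⟩
  set m : ℝ := sInf (G '' Ioi (0:ℝ)) with hmdef
  have hG0 : Tendsto G (𝓝[>] (0:ℝ)) (𝓝 m) := hGmono.tendsto_nhdsGT hGbdd
  have hmge : -(b ^ 4 / 4 - b ^ 2 / 2) ≤ m :=
    le_csInf ⟨G 1, mem_image_of_mem _ (by norm_num)⟩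
      (by rintro _ ⟨x, hx, rfl⟩; exact hGge x hx)
  -- modified antiderivative, continuous at 0 from the right
  set H : ℝ → ℝ := fun t => if t = 0 then m else G t with hHdef
  have hH0 : ContinuousWithinAt H (Ici (0:ℝ)) 0 := by
    have hins : Ici (0:ℝ) = insert 0 (Ioi 0) := by
      rw [Set.Ioi_insert]
    unfold ContinuousWithinAt
    rw [hins, nhdsWithin_insert]
    have hH00 : H 0 = m := by simp [hHdef]
    rw [hH00]
    refine Tendsto.sup ?_ ?_
    · rw [hH00.symm]
      exact tendsto_pure_nhds H 0
    · refine hG0.congr' ?_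
      filter_upwards [self_mem_nhdsWithin] with u hu
      simp [hHdef, ne_of_gt (show (0:ℝ) < u from hu)]
  have hHd : ∀ x ∈ Ioi (0:ℝ), HasDerivAt H (2 / x * (deriv y x) ^ 2) x := by
    intro x hx
    have hG : HasDerivAt G (2 / x * (deriv y x) ^ 2) x := by
      have := (hED x hx).neg
      have heq : -(-(2 / x) * (deriv y x) ^ 2) = 2 / x * (deriv y x) ^ 2 := by ring
      rw [heq] at this
      exact this
    refine hG.congr_of_eventuallyEq ?_
    filter_upwards [eventually_ne_nhds (ne_of_gt hx)] with z hz
    simp [hHdef, hz]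
  have hHtop : Tendsto H atTop (𝓝 (⨆ x, G1 x)) := by
    refine hGt.congr' ?_
    filter_upwards [eventually_gt_atTop (0:ℝ)] with x hx
    simp [hHdef, ne_of_gt hx]
  have hpos : ∀ x ∈ Ioi (0:ℝ), 0 ≤ 2 / x * (deriv y x) ^ 2 := by
    intro x hx
    exact mul_nonneg (div_nonneg (by norm_num) (le_of_lt hx)) (sq_nonneg _)
  have hint : IntegrableOn (fun t => 2 / t * (deriv y t) ^ 2) (Ioi (0:ℝ)) :=
    integrableOn_Ioi_deriv_of_nonneg hH0 hHd hpos hHtop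
  have hval : ∫ t in Ioi (0:ℝ), 2 / t * (deriv y t) ^ 2 = (⨆ x, G1 x) - H 0 :=
    integral_Ioi_of_hasDerivAt_of_nonneg hH0 hHd hpos hHtop
  have hH00 : H 0 = m := by simp [hHdef]
  have hint' : IntegrableOn (fun t => (deriv y t) ^ 2 / t) (Ioi (0:ℝ)) := by
    refine (hint.const_mul (1/2)).congr (ae_of_all _ fun t => ?_)
    simp only
    ring
  refine ⟨hint', ?_⟩
  have h2 : 2 * ∫ t in Ioi (0:ℝ), (deriv y t) ^ 2 / t
      = ∫ t in Ioi (0:ℝ), 2 / t * (deriv y t) ^ 2 := by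
    rw [← integral_const_mul]
    refine integral_congr_ae (ae_of_all _ fun t => ?_)
    simp only
    ring
  rw [h2, hval, hH00]
  linarith
end
end

section
/- Let y be a solution of the initial value problem with energy E, and suppose t₂ < τ are positive times such that y(t₂) = 1, ẏ(t) > 0 for all t ∈ (t₂, τ), ẏ(τ) = 0, and E(t) ≥ 0 on [t₂, τ]. Then y(τ) ≥ √2 and E(t₂) ≥ (1/τ)·∫₁^{√2} √(−2V(s)) ds, where V(s) = s⁴/4 − s²/2; in particular E(t₂) ≥ c/τ for an absolute constant c > 0. -/
noncomputable section

/-- the integrand `√(-2 V(s))` -/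
def gFun (s : ℝ) : ℝ := Real.sqrt (-2 * (s ^ 4 / 4 - s ^ 2 / 2))

lemma gFun_cont : Continuous gFun :=
  Real.continuous_sqrt.comp (by continuity)

lemma one_lt_sqrt_two : (1 : ℝ) < Real.sqrt 2 := by
  have : (1 : ℝ) = Real.sqrt 1 := by simp
  rw [this]
  exact Real.sqrt_lt_sqrt (by norm_num) (by norm_num)

lemma cInt_pos : 0 < ∫ s in (1 : ℝ)..Real.sqrt 2, gFun s := by
  apply intervalIntegral.intervalIntegral_pos_of_pos_on
    (gFun_cont.intervalIntegrable _ _)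
  · intro x hx
    have hx1 : 1 < x := hx.1
    have hx2 : x ^ 2 < 2 := by
      have := hx.2
      nlinarith [Real.sq_sqrt (by norm_num : (2:ℝ) ≥ 0), Real.sqrt_nonneg 2]
    apply Real.sqrt_pos.mpr
    have h : 0 < x ^ 2 * (2 - x ^ 2) :=
      mul_pos (by nlinarith) (by linarith)
    nlinarith
  · exact one_lt_sqrt_two

theorem energy_lower_bound_at_turning :
    ∃ c : ℝ, 0 < c ∧
      ∀ b : ℝ, ∀ y : ℝ → ℝ, IsSolution b y →
        ∀ t₂ τ : ℝ, 0 < t₂ → t₂ < τ → y t₂ = 1 →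
          (∀ t ∈ Set.Ioo t₂ τ, 0 < deriv y t) →
          deriv y τ = 0 →
          (∀ t ∈ Set.Icc t₂ τ, 0 ≤ energy y t) →
          Real.sqrt 2 ≤ y τ ∧
          (1 / τ) * ∫ s in (1 : ℝ)..Real.sqrt 2,
              Real.sqrt (-2 * (s ^ 4 / 4 - s ^ 2 / 2)) ≤ energy y t₂ ∧
          c / τ ≤ energy y t₂ := by
  refine ⟨∫ s in (1 : ℝ)..Real.sqrt 2, gFun s, cInt_pos, ?_⟩
  rintro b y ⟨hy0, hdy0, hdiff, hdiff', hode⟩ t₂ τ ht₂ htτ hyt₂ hpos hdyτ hE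
  have hτ : 0 < τ := ht₂.trans htτ
  -- continuity of y and deriv y on [t₂, τ]
  have hycont : ContinuousOn y (Set.Icc t₂ τ) := fun t ht =>
    ((hdiff t (ht₂.le.trans ht.1)).continuousAt).continuousWithinAt
  have hdycont : ContinuousOn (deriv y) (Set.Icc t₂ τ) := fun t ht =>
    ((hdiff' t (ht₂.trans_le ht.1)).continuousAt).continuousWithinAt
  -- y is strictly monotone on [t₂, τ]
  have hmono : StrictMonoOn y (Set.Icc t₂ τ) := by
    apply strictMonoOn_of_deriv_pos (convex_Icc _ _) hycont
    intro t ht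
    rw [interior_Icc] at ht
    exact hpos t ht
  have hyτ_gt : 1 < y τ := by
    have := hmono (Set.left_mem_Icc.mpr htτ.le) (Set.right_mem_Icc.mpr htτ.le) htτ
    linarith [hyt₂ ▸ this]
  -- Step 1 : √2 ≤ y τ
  have hEτ := hE τ (Set.mem_Icc.mpr ⟨htτ.le, le_rfl⟩)
  have hsq : 2 ≤ (y τ) ^ 2 := by
    unfold energy at hEτ
    rw [hdyτ] at hEτ
    by_contra h
    push_neg at h
    have h1 : (0:ℝ) < y τ ^ 2 := by nlinarith
    nlinarith [mul_pos h1 (show (0:ℝ) < 2 - y τ ^ 2 by linarith)]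
  have hstep1 : Real.sqrt 2 ≤ y τ := by
    have : Real.sqrt 2 ≤ Real.sqrt ((y τ) ^ 2) := Real.sqrt_le_sqrt hsq
    rwa [Real.sqrt_sq (by linarith : (0:ℝ) ≤ y τ)] at this
  -- deriv y ≥ 0 on [t₂, τ]
  have hdy_t₂ : 0 ≤ deriv y t₂ := by
    have hc : Filter.Tendsto (deriv y) (nhdsWithin t₂ (Set.Ioi t₂)) (nhds (deriv y t₂)) :=
      ((hdiff' t₂ ht₂).continuousAt).continuousWithinAt.tendsto
    refine ge_of_tendsto hc ?_
    filter_upwards [Ioo_mem_nhdsGT_of_mem (Set.mem_Ico.mpr ⟨le_rfl, htτ⟩)] with t ht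
      using (hpos t ht).le
  have hdy_nn : ∀ t ∈ Set.Icc t₂ τ, 0 ≤ deriv y t := by
    intro t ht
    rcases eq_or_lt_of_le ht.1 with h1 | h1
    · exact h1 ▸ hdy_t₂
    rcases eq_or_lt_of_le ht.2 with h2 | h2
    · rw [h2, hdyτ]
    · exact (hpos t ⟨h1, h2⟩).le
  -- derivative of energy
  have hEd : ∀ t, 0 < t → HasDerivAt (energy y) (-(2 / t) * (deriv y t) ^ 2) t := by
    intro t ht
    have h1 : HasDerivAt y (deriv y t) t := (hdiff t ht.le).hasDerivAt
    have h2 : HasDerivAt (deriv y) (deriv (deriv y) t) t := (hdiff' t ht).hasDerivAt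
    have h3 : HasDerivAt (fun u => (1/2) * (deriv y u) ^ 2 + (1/4) * (y u) ^ 4
        - (1/2) * (y u) ^ 2)
        ((1/2) * ((2 : ℕ) * (deriv y t) ^ 1 * deriv (deriv y) t)
          + (1/4) * ((4 : ℕ) * (y t) ^ 3 * deriv y t)
          - (1/2) * ((2 : ℕ) * (y t) ^ 1 * deriv y t)) t :=
      (((h2.pow 2).const_mul (1/2)).add ((h1.pow 4).const_mul (1/4))).sub
        ((h1.pow 2).const_mul (1/2))
    have key := hode t ht
    have heq : (1/2) * ((2 : ℕ) * (deriv y t) ^ 1 * deriv (deriv y) t)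
          + (1/4) * ((4 : ℕ) * (y t) ^ 3 * deriv y t)
          - (1/2) * ((2 : ℕ) * (y t) ^ 1 * deriv y t)
        = -(2 / t) * (deriv y t) ^ 2 := by
      push_cast
      linear_combination (deriv y t) * key
    rw [heq] at h3
    exact h3
  -- FTC for the energy
  have hIcont : ContinuousOn (fun t => -(2 / t) * (deriv y t) ^ 2) (Set.Icc t₂ τ) := by
    apply ContinuousOn.mul
    · apply ContinuousOn.neg
      apply ContinuousOn.div continuousOn_const continuousOn_id
      intro t ht
      exact (ht₂.trans_le ht.1).ne'
    · exact hdycont.pow 2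
  have hIint : IntervalIntegrable (fun t => -(2 / t) * (deriv y t) ^ 2) MeasureTheory.volume t₂ τ := by
    apply ContinuousOn.intervalIntegrable
    rwa [Set.uIcc_of_le htτ.le]
  have hFTC : ∫ t in t₂..τ, -(2 / t) * (deriv y t) ^ 2
      = energy y τ - energy y t₂ := by
    apply intervalIntegral.integral_eq_sub_of_hasDerivAt _ hIint
    intro t ht
    rw [Set.uIcc_of_le htτ.le] at ht
    exact hEd t (ht₂.trans_le ht.1)
  -- pointwise comparison
  have hptwise : ∀ t ∈ Set.Icc t₂ τ,
      (2 / τ) * (deriv y t * gFun (y t)) ≤ (2 / t) * (deriv y t) ^ 2 := by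
    intro t ht
    have ht0 : 0 < t := ht₂.trans_le ht.1
    have hEt := hE t ht
    unfold energy at hEt
    have hle : -2 * ((y t) ^ 4 / 4 - (y t) ^ 2 / 2) ≤ (deriv y t) ^ 2 := by nlinarith
    have hgle : gFun (y t) ≤ deriv y t := by
      have h1 : gFun (y t) ≤ Real.sqrt ((deriv y t) ^ 2) := Real.sqrt_le_sqrt hle
      rwa [Real.sqrt_sq (hdy_nn t ht)] at h1
    have hdnn := hdy_nn t ht
    have h2 : (2 / τ) * (deriv y t * gFun (y t)) ≤ (2 / τ) * (deriv y t) ^ 2 := by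
      have : deriv y t * gFun (y t) ≤ (deriv y t) ^ 2 := by nlinarith
      have hτ' : (0:ℝ) ≤ 2 / τ := by positivity
      nlinarith
    have h3 : (2 / τ) * (deriv y t) ^ 2 ≤ (2 / t) * (deriv y t) ^ 2 := by
      have : 2 / τ ≤ 2 / t := by
        apply div_le_div_of_nonneg_left (by norm_num) ht0 ht.2
      nlinarith [sq_nonneg (deriv y t)]
    linarith
  -- integrability of the lower function
  have hJcont : ContinuousOn (fun t => (2 / τ) * (deriv y t * gFun (y t)))
      (Set.Icc t₂ τ) :=
    ContinuousOn.mul continuousOn_const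
      (hdycont.mul (gFun_cont.comp_continuousOn hycont))
  have hJint : IntervalIntegrable (fun t => (2 / τ) * (deriv y t * gFun (y t)))
      MeasureTheory.volume t₂ τ := by
    apply ContinuousOn.intervalIntegrable
    rwa [Set.uIcc_of_le htτ.le]
  have hIint' : IntervalIntegrable (fun t => (2 / t) * (deriv y t) ^ 2)
      MeasureTheory.volume t₂ τ := by
    have heq : (fun t => (2 / t) * (deriv y t) ^ 2)
        = fun t => -(-(2 / t) * (deriv y t) ^ 2) := by funext t; ring
    rw [heq]
    exact hIint.neg
  have hmono_int : ∫ t in t₂..τ, (2 / τ) * (deriv y t * gFun (y t))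
      ≤ ∫ t in t₂..τ, (2 / t) * (deriv y t) ^ 2 :=
    intervalIntegral.integral_mono_on htτ.le hJint hIint' hptwise
  -- change of variables
  have hCOV : ∫ t in t₂..τ, deriv y t * gFun (y t) = ∫ s in (1:ℝ)..y τ, gFun s := by
    have h := intervalIntegral.integral_comp_smul_deriv
      (f := y) (f' := deriv y) (g := gFun) (a := t₂) (b := τ)
      (fun t ht => (hdiff t (ht₂.le.trans ((Set.uIcc_of_le htτ.le ▸ ht).1))).hasDerivAt)
      (Set.uIcc_of_le htτ.le ▸ hdycont) gFun_cont
    simp only [smul_eq_mul, Function.comp] at h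
    rw [h, hyt₂]
  -- splitting the s-integral
  have hint1 : IntervalIntegrable gFun MeasureTheory.volume 1 (Real.sqrt 2) :=
    gFun_cont.intervalIntegrable _ _
  have hint2 : IntervalIntegrable gFun MeasureTheory.volume (Real.sqrt 2) (y τ) :=
    gFun_cont.intervalIntegrable _ _
  have hsplit : ∫ s in (1:ℝ)..y τ, gFun s
      = (∫ s in (1:ℝ)..Real.sqrt 2, gFun s) + ∫ s in (Real.sqrt 2)..(y τ), gFun s :=
    (intervalIntegral.integral_add_adjacent_intervals hint1 hint2).symm
  have htail : 0 ≤ ∫ s in (Real.sqrt 2)..(y τ), gFun s :=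
    intervalIntegral.integral_nonneg hstep1 (fun s _ => Real.sqrt_nonneg _)
  -- put everything together
  have hpull : ∫ t in t₂..τ, (2 / τ) * (deriv y t * gFun (y t))
      = (2 / τ) * ∫ t in t₂..τ, deriv y t * gFun (y t) :=
    intervalIntegral.integral_const_mul _ _
  have hflip : ∫ t in t₂..τ, (2 / t) * (deriv y t) ^ 2
      = energy y t₂ - energy y τ := by
    have : ∫ t in t₂..τ, (2 / t) * (deriv y t) ^ 2
        = - ∫ t in t₂..τ, -(2 / t) * (deriv y t) ^ 2 := by
      rw [← intervalIntegral.integral_neg]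
      congr 1; funext t; ring
    rw [this, hFTC]; ring
  have hchain : (2 / τ) * ∫ s in (1:ℝ)..Real.sqrt 2, gFun s ≤ energy y t₂ := by
    have h1 : (2 / τ) * ((∫ s in (1:ℝ)..Real.sqrt 2, gFun s)
        + ∫ s in (Real.sqrt 2)..(y τ), gFun s) ≤ energy y t₂ - energy y τ := by
      rw [← hsplit, ← hCOV, ← hpull, ← hflip]
      exact hmono_int
    have h2 : 0 ≤ energy y τ := hEτ
    have hτ' : (0:ℝ) ≤ 2 / τ := by positivity
    nlinarith
  have hcnn : 0 ≤ ∫ s in (1:ℝ)..Real.sqrt 2, gFun s := cInt_pos.le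
  have h1τ : (1 / τ) * ∫ s in (1:ℝ)..Real.sqrt 2, gFun s ≤ energy y t₂ := by
    have : (1 / τ) * ∫ s in (1:ℝ)..Real.sqrt 2, gFun s
        ≤ (2 / τ) * ∫ s in (1:ℝ)..Real.sqrt 2, gFun s := by
      apply mul_le_mul_of_nonneg_right _ hcnn
      exact (div_le_div_iff_of_pos_right hτ).mpr (by norm_num)
    linarith
  refine ⟨hstep1, ?_, ?_⟩
  · exact h1τ
  · have : (∫ s in (1:ℝ)..Real.sqrt 2, gFun s) / τ
        = (1 / τ) * ∫ s in (1:ℝ)..Real.sqrt 2, gFun s := by ring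
    rw [this]
    exact h1τ
end
end

section
/- Let y be a solution of the initial value problem with energy E, and suppose T₁ < T₂ are positive times such that ẏ(t) < 0 and E(t) > 0 for all t ∈ [T₁, T₂], y(T₁) = −1/2, and y(T₂) = −1. Then T₂ − T₁ < 3/2, and the energy lost satisfies E(T₁) − E(T₂) > 3/(8·T₂). -/
noncomputable section

theorem descent_energy_loss (b : ℝ) (y : ℝ → ℝ) (hy : IsSolution b y)
    (T₁ T₂ : ℝ) (hT₁ : 0 < T₁) (hlt : T₁ < T₂)
    (hv : ∀ t ∈ Set.Icc T₁ T₂, deriv y t < 0)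
    (hE : ∀ t ∈ Set.Icc T₁ T₂, 0 < energy y t)
    (h1 : y T₁ = -1 / 2) (h2 : y T₂ = -1) :
    T₂ - T₁ < 3 / 2 ∧ 3 / (8 * T₂) < energy y T₁ - energy y T₂ := by
  obtain ⟨_, _, hdy, hddy, hode⟩ := hy
  have hT₂ : 0 < T₂ := hT₁.trans hlt
  have hpos : ∀ t ∈ Set.Icc T₁ T₂, 0 < t := fun t ht => hT₁.trans_le ht.1
  have hdiff : ∀ t ∈ Set.Icc T₁ T₂, DifferentiableAt ℝ y t :=
    fun t ht => hdy t (hpos t ht).le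
  have hconty : ContinuousOn y (Set.Icc T₁ T₂) :=
    fun t ht => (hdiff t ht).continuousAt.continuousWithinAt
  -- y is antitone on Icc
  have hanti : AntitoneOn y (Set.Icc T₁ T₂) := by
    apply antitoneOn_of_deriv_nonpos (convex_Icc T₁ T₂) hconty
    · intro t ht
      rw [interior_Icc] at ht
      exact (hdiff t ⟨ht.1.le, ht.2.le⟩).differentiableWithinAt
    · intro t ht
      rw [interior_Icc] at ht
      exact (hv t ⟨ht.1.le, ht.2.le⟩).le
  have hyub : ∀ t ∈ Set.Icc T₁ T₂, y t ≤ -1/2 := by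
    intro t ht
    have := hanti (Set.left_mem_Icc.2 hlt.le) ht ht.1
    rw [h1] at this; linarith
  have hylb : ∀ t ∈ Set.Icc T₁ T₂, -1 ≤ y t := by
    intro t ht
    have := hanti ht (Set.right_mem_Icc.2 hlt.le) ht.2
    rw [h2] at this; linarith
  -- velocity bound: deriv y t < -7/16
  have hvb : ∀ t ∈ Set.Icc T₁ T₂, deriv y t < -(7/16) := by
    intro t ht
    have hEt := hE t ht
    have hu1 := hyub t ht
    have hu2 := hylb t ht
    have hvt := hv t ht
    unfold energy at hEt
    nlinarith [sq_nonneg (deriv y t - 7/16),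
      mul_nonpos_of_nonneg_of_nonpos (by linarith : (0:ℝ) ≤ y t + 1)
        (by linarith : y t + 1/2 ≤ 0),
      sq_nonneg (y t + 1), sq_nonneg (y t + 1/2)]
  -- Part 1: T₂ - T₁ < 3/2 via MVT
  have hlen : T₂ - T₁ < 3/2 := by
    obtain ⟨c, hc, hslope⟩ := exists_deriv_eq_slope y hlt hconty
      (fun t ht => (hdiff t ⟨ht.1.le, ht.2.le⟩).differentiableWithinAt)
    have hcv := hvb c ⟨hc.1.le, hc.2.le⟩
    rw [hslope, h1, h2] at hcv
    have hlen0 : 0 < T₂ - T₁ := by linarith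
    rw [div_lt_iff₀ hlen0] at hcv
    nlinarith
  refine ⟨hlen, ?_⟩
  -- energy is differentiable at points of Icc
  have hEdiff : ∀ t ∈ Set.Icc T₁ T₂, DifferentiableAt ℝ (energy y) t := by
    intro t ht
    have htpos := hpos t ht
    have h1d : HasDerivAt y (deriv y t) t := (hdy t htpos.le).hasDerivAt
    have h2d : HasDerivAt (deriv y) (deriv (deriv y) t) t := (hddy t htpos).hasDerivAt
    have hD := (((h2d.pow 2).const_mul (1/2:ℝ)).add
      ((h1d.pow 4).const_mul (1/4:ℝ))).sub ((h1d.pow 2).const_mul (1/2:ℝ))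
    exact hD.differentiableAt
  -- energy derivative on Ioo
  have hEderiv : ∀ t ∈ Set.Ioo T₁ T₂,
      HasDerivAt (energy y) (-(2/t) * (deriv y t)^2) t := by
    intro t ht
    have htpos : 0 < t := hT₁.trans ht.1
    have h1d : HasDerivAt y (deriv y t) t := (hdy t htpos.le).hasDerivAt
    have h2d : HasDerivAt (deriv y) (deriv (deriv y) t) t := (hddy t htpos).hasDerivAt
    have hD := (((h2d.pow 2).const_mul (1/2:ℝ)).add
      ((h1d.pow 4).const_mul (1/4:ℝ))).sub ((h1d.pow 2).const_mul (1/2:ℝ))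
    have hgoal : HasDerivAt (energy y)
        ((1/2) * (↑(2:ℕ) * deriv y t ^ (2-1) * deriv (deriv y) t)
          + (1/4) * (↑(4:ℕ) * y t ^ (4-1) * deriv y t)
          - (1/2) * (↑(2:ℕ) * y t ^ (2-1) * deriv y t)) t := hD
    convert hgoal using 1
    have hode' := hode t htpos
    push_cast
    linear_combination (-(deriv y t)) * hode'
  -- F t = energy y t - c * y t is antitone on Icc, where c = 7/(8T₂)
  set c : ℝ := 7 / (8 * T₂) with hc_def
  have hF : AntitoneOn (fun t => energy y t - c * y t) (Set.Icc T₁ T₂) := by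
    apply antitoneOn_of_deriv_nonpos (convex_Icc T₁ T₂)
    · exact ContinuousOn.sub
        (fun t ht => (hEdiff t ht).continuousAt.continuousWithinAt)
        (continuousOn_const.mul hconty)
    · intro t ht
      rw [interior_Icc] at ht
      have htpos : 0 < t := hT₁.trans ht.1
      have hd := (hEderiv t ht).sub (((hdy t htpos.le).hasDerivAt).const_mul c)
      exact hd.differentiableAt.differentiableWithinAt
    · intro t ht
      rw [interior_Icc] at ht
      have htpos : 0 < t := hT₁.trans ht.1
      have hd := (hEderiv t ht).sub (((hdy t htpos.le).hasDerivAt).const_mul c)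
      rw [HasDerivAt.deriv (f := fun t => energy y t - c * y t) hd]
      have hvt := hvb t ⟨ht.1.le, ht.2.le⟩
      have ht2 : t ≤ T₂ := ht.2.le
      have hfrac : 2 / T₂ ≤ 2 / t :=
        div_le_div_of_nonneg_left (by norm_num) htpos ht2
      have hvsq : (0:ℝ) ≤ (deriv y t)^2 := sq_nonneg _
      have hmul : 0 ≤ deriv y t * (16 * deriv y t + 7) :=
        le_of_lt (mul_pos_of_neg_of_neg (by linarith) (by linarith))
      have key : -(2/T₂) * (deriv y t)^2 - c * deriv y t ≤ 0 := by
        rw [hc_def]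
        have heq : -(2/T₂) * (deriv y t)^2 - 7/(8*T₂) * deriv y t
            = -((deriv y t * (16 * deriv y t + 7)) / (8 * T₂)) := by
          field_simp
          ring
        rw [heq]
        have : 0 ≤ (deriv y t * (16 * deriv y t + 7)) / (8 * T₂) :=
          div_nonneg hmul (by linarith)
        linarith
      nlinarith [mul_le_mul_of_nonneg_right hfrac hvsq]
  have hFle := hF (Set.left_mem_Icc.2 hlt.le) (Set.right_mem_Icc.2 hlt.le) hlt.le
  simp only [h1, h2] at hFle
  -- hFle : energy y T₂ - c * (-1) ≤ energy y T₁ - c * (-1/2), so ΔE ≥ c/2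
  have hhalf : c / 2 ≤ energy y T₁ - energy y T₂ := by linarith
  have hlt38 : 3 / (8 * T₂) < c / 2 := by
    rw [hc_def, div_div]
    rw [div_lt_div_iff₀ (by linarith) (by linarith)]
    nlinarith
  linarith
end
end
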